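/- arXiv:1604.00261 — 5 statements merged into one kernel-verified Lean document; each statement's English description precedes it below -/
import Mathlib

section
/- Let g: ℝ^d → ℝ be the normalized indicator function of the ℓ1-ball of radius σ > 0, i.e., g = 𝟙_{σB₁^d} / vol_d(σB₁^d). Then for any f ∈ L∞(ℝ^d) and any coordinate direction e_j, the convolution f∗g has a weak partial derivative in direction e_j satisfying ‖D^{e_j}(f∗g)‖_∞ ≤ (d/σ)·‖f‖_∞. -/
open MeasureTheory Pointwise

/-- The closed ℓ1-ball of radius ρ around `c` in ℝ^d. -/
def l1Ball {d : ℕ} (c : Fin d → ℝ) (ρ : ℝ) : Set (Fin d → ℝ) :=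
  {y | ∑ j, |y j - c j| ≤ ρ}

/-- Partial derivative of a (smooth test) function in the j-th coordinate direction. -/
noncomputable def pderivDir {d : ℕ} (j : Fin d) (φ : (Fin d → ℝ) → ℝ) :
    (Fin d → ℝ) → ℝ :=
  fun x => fderiv ℝ φ x (Pi.single j 1)

section helpers

variable {n : ℕ}

lemma l1Ball_zero (ρ : ℝ) : l1Ball (0 : Fin n → ℝ) ρ = {y | ∑ k, |y k| ≤ ρ} := by
  simp [l1Ball]

lemma continuous_sum_abs : Continuous (fun y : Fin n → ℝ => ∑ k, |y k|) := by
  exact continuous_finset_sum _ (fun k _ => (continuous_apply k).abs)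

lemma measurableSet_sum_abs_le (ρ : ℝ) :
    MeasurableSet {y : Fin n → ℝ | ∑ k, |y k| ≤ ρ} :=
  measurableSet_le continuous_sum_abs.measurable measurable_const

lemma isCompact_sum_abs_le (ρ : ℝ) : IsCompact {y : Fin n → ℝ | ∑ k, |y k| ≤ ρ} := by
  refine Metric.isCompact_of_isClosed_isBounded
    (isClosed_le continuous_sum_abs continuous_const) ?_
  refine (Metric.isBounded_closedBall (x := (0 : Fin n → ℝ)) (r := ρ)).subset ?_
  intro y hy
  simp only [Metric.mem_closedBall, dist_zero_right]
  have h0 : ∀ k, |y k| ≤ ρ := by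
    intro k
    calc |y k| ≤ ∑ k, |y k| :=
          Finset.single_le_sum (fun k _ => abs_nonneg (y k)) (Finset.mem_univ k)
      _ ≤ ρ := hy
  have hρ : 0 ≤ ρ :=
    le_trans (Finset.sum_nonneg (fun k _ => abs_nonneg (y k))) hy
  exact pi_norm_le_iff_of_nonneg hρ |>.mpr (fun k => by simpa using h0 k)

lemma volume_sum_abs_le {ρ : ℝ} (hρ : 0 ≤ ρ) :
    volume {y : Fin n → ℝ | ∑ k, |y k| ≤ ρ} =
      ENNReal.ofReal ((2 * ρ) ^ n / (Nat.factorial n)) := by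
  rcases Nat.eq_zero_or_pos n with hn | hn
  · subst hn
    have : {y : Fin 0 → ℝ | ∑ k, |y k| ≤ ρ} = Set.univ := by
      ext y; simpa using hρ
    rw [this]
    simp [volume_pi, Measure.pi_univ]
  · haveI : Nonempty (Fin n) := ⟨⟨0, hn⟩⟩
    have h := MeasureTheory.volume_sum_rpow_le (ι := Fin n) (p := 1) le_rfl ρ
    have hset : {x : Fin n → ℝ | (∑ i, |x i| ^ (1 : ℝ)) ^ (1 / (1:ℝ)) ≤ ρ}
        = {y : Fin n → ℝ | ∑ k, |y k| ≤ ρ} := by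
      ext x; simp [Real.rpow_one]
    rw [hset] at h
    rw [h]
    have h2 : (1 : ℝ) / 1 + 1 = 2 := by norm_num
    rw [h2, Real.Gamma_two]
    have h3 : ((Fintype.card (Fin n) : ℝ) / 1 + 1) = ((n : ℝ) + 1) := by simp
    rw [h3]
    rw [Real.Gamma_nat_eq_factorial n]
    rw [← ENNReal.ofReal_pow hρ, ← ENNReal.ofReal_mul (by positivity)]
    congr 1
    simp only [Fintype.card_fin, mul_one]
    rw [mul_pow]
    ring

lemma sum_abs_insertNth (j : Fin (n + 1)) (r : ℝ) (z : Fin n → ℝ) :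
    ∑ k, |(j.insertNth r z) k| = |r| + ∑ k, |z k| := by
  rw [Fin.sum_univ_succAbove (fun k => |(j.insertNth r z) k|) j]
  simp

lemma insertNth_eq_base_add (j : Fin (n + 1)) (r : ℝ) (z : Fin n → ℝ) :
    j.insertNth r z = j.insertNth (0:ℝ) (z : Fin n → ℝ) + r • (Pi.single j 1 : Fin (n+1) → ℝ) := by
  funext k
  rcases eq_or_ne k j with rfl | hk
  · simp
  · obtain ⟨m, rfl⟩ := Fin.exists_succAbove_eq hk
    simp [Pi.single_eq_of_ne (Fin.succAbove_ne j m)]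

lemma integral_insertNth (j : Fin (n+1)) (H : (Fin (n+1) → ℝ) → ℝ)
    (hH : Integrable H) :
    ∫ t, H t = ∫ z : Fin n → ℝ, ∫ r : ℝ, H (j.insertNth r z) := by
  set e := MeasurableEquiv.piFinSuccAbove (fun _ : Fin (n+1) => ℝ) j with he
  have mp := (volume_preserving_piFinSuccAbove (fun _ : Fin (n+1) => ℝ) j).symm
  have emb := e.symm.measurableEmbedding
  rw [← mp.integral_comp emb H]
  have hint : Integrable (fun p : ℝ × (Fin n → ℝ) => H (e.symm p)) (volume.prod volume) := by
    rw [← Measure.volume_eq_prod]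
    exact (mp.integrable_comp_emb emb).mpr hH
  rw [show (volume : Measure (ℝ × (Fin n → ℝ))) = volume.prod volume from
    Measure.volume_eq_prod _ _]
  rw [MeasureTheory.integral_prod_symm _ hint]
  rfl

lemma measurable_insertNth_pair (j : Fin (n+1)) :
    Measurable (fun p : ℝ × (Fin n → ℝ) => (j.insertNth p.1 p.2 : Fin (n+1) → ℝ)) :=
  (MeasurableEquiv.piFinSuccAbove (fun _ : Fin (n+1) => ℝ) j).symm.measurable

end helpers

/-- Let g be the normalized indicator of the ℓ1-ball of radius σ (which has volume
(2σ)^d/d!). Then for any essentially bounded measurable f, the convolution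
F(x) = ∫ f(x+t) g(t) dt has a weak partial derivative in direction e_j (in the sense of
integration against smooth compactly supported test functions) bounded by (d/σ)·‖f‖_∞. -/
theorem conv_weak_deriv_gain (d : ℕ) (hd : 0 < d) (σ : ℝ) (hσ : 0 < σ) (j : Fin d)
    (g : (Fin d → ℝ) → ℝ)
    (hg : g = Set.indicator (l1Ball (0 : Fin d → ℝ) σ)
      (fun _ => ((2 * σ) ^ d / (Nat.factorial d))⁻¹))
    (f : (Fin d → ℝ) → ℝ) (hfm : Measurable f) (C : ℝ) (hfb : ∀ x, |f x| ≤ C)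
    (F : (Fin d → ℝ) → ℝ) (hF : ∀ x, F x = ∫ t, f (x + t) * g t) :
    ∃ D : (Fin d → ℝ) → ℝ, (∀ x, |D x| ≤ (d / σ) * C) ∧
      ∀ φ : (Fin d → ℝ) → ℝ, ContDiff ℝ (⊤ : ℕ∞) φ → HasCompactSupport φ →
        ∫ x, F x * pderivDir j φ x = - ∫ x, D x * φ x := by
  obtain ⟨n, rfl⟩ : ∃ n, d = n + 1 := ⟨d - 1, (Nat.succ_pred_eq_of_pos hd).symm⟩
  have hC : 0 ≤ C := le_trans (abs_nonneg _) (hfb 0)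
  set V : ℝ := (2 * σ) ^ (n+1) / (Nat.factorial (n+1)) with hVdef
  have hVpos : 0 < V := by positivity
  set B : Set (Fin (n+1) → ℝ) := {y | ∑ k, |y k| ≤ σ} with hBdef
  have hgB : g = B.indicator (fun _ => V⁻¹) := by rw [hg, l1Ball_zero]
  have hBmeas : MeasurableSet B := measurableSet_sum_abs_le σ
  have hBcomp : IsCompact B := isCompact_sum_abs_le σ
  have hBvol : volume B = ENNReal.ofReal V := volume_sum_abs_le hσ.le
  have hgm : Measurable g := by
    rw [hgB]; exact measurable_const.indicator hBmeas
  -- the (n)-dimensional ball and related functions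
  set B' : Set (Fin n → ℝ) := {z | ∑ k, |z k| ≤ σ} with hB'def
  have hB'meas : MeasurableSet B' := measurableSet_sum_abs_le σ
  have hB'vol : volume B' = ENNReal.ofReal ((2 * σ) ^ n / (Nat.factorial n)) :=
    volume_sum_abs_le hσ.le
  have hB'fin : volume B' < ⊤ := by rw [hB'vol]; exact ENNReal.ofReal_lt_top
  set χ : (Fin n → ℝ) → ℝ := B'.indicator (fun _ => (1:ℝ)) with hχdef
  have hχmeas : Measurable χ := measurable_const.indicator hB'meas
  have hχ_mem : ∀ z ∈ B', χ z = 1 := fun z hz => Set.indicator_of_mem hz _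
  have hχ_nmem : ∀ z ∉ B', χ z = 0 := fun z hz => Set.indicator_of_notMem hz _
  have hχ01 : ∀ z, 0 ≤ χ z ∧ χ z ≤ 1 := by
    intro z; by_cases hz : z ∈ B' <;> simp [hχ_mem, hχ_nmem, hz]
  have hχint : Integrable χ := by
    rw [hχdef]
    exact (integrable_indicator_iff hB'meas).mpr
      ((integrableOn_const_iff).mpr (Or.inr hB'fin))
  set a : (Fin n → ℝ) → ℝ := fun z => σ - ∑ k, |z k| with hadef
  have hacont : Continuous a := continuous_const.sub continuous_sum_abs
  set w : ℝ → (Fin n → ℝ) → (Fin (n+1) → ℝ) := fun r z => j.insertNth r z with hwdef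
  -- membership of the slice endpoints in B
  have hwB : ∀ z ∈ B', ∀ r : ℝ, |r| ≤ a z → w r z ∈ B := by
    intro z hz r hr
    simp only [hBdef, Set.mem_setOf_eq, hwdef, sum_abs_insertNth]
    have : ∑ k, |z k| ≤ σ := hz
    simp only [hadef] at hr
    linarith
  -- definition of D
  set D : (Fin (n+1) → ℝ) → ℝ := fun x =>
    V⁻¹ * ∫ z, χ z * (f (x + w (a z) z) - f (x + w (-(a z)) z)) with hDdef
  refine ⟨D, ?_, ?_⟩
  · -- the bound on D
    intro x
    have hbd : ∀ z, |χ z * (f (x + w (a z) z) - f (x + w (-(a z)) z))|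
        ≤ B'.indicator (fun _ => 2 * C) z := by
      intro z
      by_cases hz : z ∈ B'
      · rw [Set.indicator_of_mem hz, hχ_mem z hz, one_mul]
        calc |f (x + w (a z) z) - f (x + w (-(a z)) z)|
            ≤ |f (x + w (a z) z)| + |f (x + w (-(a z)) z)| := abs_sub _ _
          _ ≤ C + C := add_le_add (hfb _) (hfb _)
          _ = 2 * C := by ring
      · rw [Set.indicator_of_notMem hz, hχ_nmem z hz, zero_mul, abs_zero]
    have hDbound : |D x| ≤ V⁻¹ * (2 * C * ((2 * σ) ^ n / (Nat.factorial n))) := by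
      rw [hDdef]
      simp only []
      rw [abs_mul, abs_of_nonneg (inv_nonneg.mpr hVpos.le)]
      refine mul_le_mul_of_nonneg_left ?_ (inv_nonneg.mpr hVpos.le)
      calc |∫ z, χ z * (f (x + w (a z) z) - f (x + w (-(a z)) z))|
          ≤ ∫ z, |χ z * (f (x + w (a z) z) - f (x + w (-(a z)) z))| := by
            simpa only [Real.norm_eq_abs] using norm_integral_le_integral_norm
              (fun z => χ z * (f (x + w (a z) z) - f (x + w (-(a z)) z)))
        _ ≤ ∫ z, B'.indicator (fun _ => 2 * C) z := by
            refine integral_mono_of_nonneg (Filter.Eventually.of_forall fun z => abs_nonneg _)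
              ((integrable_indicator_iff hB'meas).mpr
                ((integrableOn_const_iff).mpr (Or.inr hB'fin)))
              (Filter.Eventually.of_forall hbd)
        _ = 2 * C * ((2 * σ) ^ n / (Nat.factorial n)) := by
            rw [MeasureTheory.integral_indicator_const _ hB'meas, measureReal_def, hB'vol,
              ENNReal.toReal_ofReal (by positivity), smul_eq_mul]
            ring
    refine hDbound.trans (le_of_eq ?_)
    have hfn : ((Nat.factorial n : ℝ)) ≠ 0 := by positivity
    have h2σ : ((2*σ)^n : ℝ) ≠ 0 := by positivity
    rw [hVdef, Nat.factorial_succ, pow_succ]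
    push_cast
    field_simp
  · -- the weak derivative identity
    intro φ hφ hcs
    set φ' : (Fin (n+1) → ℝ) → ℝ := pderivDir j φ with hφ'def
    have hφcont : Continuous φ := hφ.continuous
    have hφ'cont : Continuous φ' :=
      (ContinuousLinearMap.apply ℝ ℝ (Pi.single j 1 : Fin (n+1) → ℝ)).continuous.comp
        (hφ.continuous_fderiv (by simp))
    have hφ'cs : HasCompactSupport φ' := hcs.fderiv_apply ℝ (Pi.single j 1)
    have hφint : Integrable φ := hφcont.integrable_of_hasCompactSupport hcs
    have hφ'int : Integrable φ' := hφ'cont.integrable_of_hasCompactSupport hφ'cs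
    obtain ⟨M, hM⟩ := hφ'cont.bounded_above_of_compact_support hφ'cs
    obtain ⟨Mφ, hMφ⟩ := hφcont.bounded_above_of_compact_support hcs
    have hM0 : 0 ≤ M := le_trans (norm_nonneg _) (hM 0)
    have hMφ0 : 0 ≤ Mφ := le_trans (norm_nonneg _) (hMφ 0)
    have hgabs : ∀ t, |g t| ≤ B.indicator (fun _ => V⁻¹) t := by
      intro t; rw [hgB]; by_cases ht : t ∈ B
      · simp [Set.indicator_of_mem ht, abs_of_nonneg (inv_nonneg.mpr hVpos.le)]
      · simp [Set.indicator_of_notMem ht]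
    have hBind_int : Integrable (B.indicator (fun _ => V⁻¹)) :=
      (integrable_indicator_iff hBmeas).mpr ((integrableOn_const_iff).mpr
        (Or.inr (by rw [hBvol]; exact ENNReal.ofReal_lt_top)))
    set K : Set (Fin (n+1) → ℝ) := tsupport φ with hKdef
    set K' : Set (Fin (n+1) → ℝ) := tsupport φ' with hK'def
    have hKB : IsCompact (K + B) := IsCompact.add hcs hBcomp
    have hK'B : IsCompact (K' + B) := IsCompact.add hφ'cs hBcomp
    have hKBm : MeasurableSet (K + B) := hKB.isClosed.measurableSet
    have hK'Bm : MeasurableSet (K' + B) := hK'B.isClosed.measurableSet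
    have hKBind : Integrable ((K + B).indicator (fun _ => (1:ℝ))) :=
      (integrable_indicator_iff hKBm).mpr ((integrableOn_const_iff).mpr (Or.inr hKB.measure_lt_top))
    have hK'Bind : Integrable ((K' + B).indicator (fun _ => (1:ℝ))) :=
      (integrable_indicator_iff hK'Bm).mpr ((integrableOn_const_iff).mpr (Or.inr hK'B.measure_lt_top))
    have hindnn : ∀ (S : Set (Fin (n+1) → ℝ)) (c : ℝ) (hc : 0 ≤ c) (t : Fin (n+1) → ℝ),
        0 ≤ S.indicator (fun _ => c) t := fun S c hc t =>
      Set.indicator_nonneg (fun _ _ => hc) t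
    -- continuity of r ↦ insertNth r z
    have hinsc : ∀ z : Fin n → ℝ, Continuous (fun r : ℝ => (j.insertNth r z : Fin (n+1) → ℝ)) := by
      intro z
      have : (fun r : ℝ => (j.insertNth r z : Fin (n+1) → ℝ))
          = fun r => j.insertNth (0:ℝ) z + r • (Pi.single j 1 : Fin (n+1) → ℝ) := by
        funext r; exact insertNth_eq_base_add j r z
      rw [this]; exact continuous_const.add (continuous_id.smul continuous_const)
    -- measurability of the two shifted maps
    have hmw : ∀ (c : ℝ), Measurable (fun p : (Fin (n+1) → ℝ) × (Fin n → ℝ) =>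
        (j.insertNth (c * a p.2) p.2 : Fin (n+1) → ℝ)) := by
      intro c
      exact (measurable_insertNth_pair j).comp
        (((hacont.measurable.comp measurable_snd).const_mul c).prodMk measurable_snd)
    -- key pointwise slice integral (FTC)
    have keyR : ∀ (y : Fin (n+1) → ℝ) (z : Fin n → ℝ),
        (∫ r : ℝ, g (j.insertNth r z) * φ' (y - j.insertNth r z))
          = V⁻¹ * (χ z * (φ (y - w (-(a z)) z) - φ (y - w (a z) z))) := by
      intro y z
      have hindic : (fun r : ℝ => g (j.insertNth r z) * φ' (y - j.insertNth r z))
          = Set.indicator (Set.Icc (-(a z)) (a z))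
              (fun r => V⁻¹ * φ' (y - j.insertNth r z)) := by
        funext r
        by_cases hr : |r| ≤ a z
        · have hmem : (j.insertNth r z : Fin (n+1) → ℝ) ∈ B := by
            simp only [hBdef, Set.mem_setOf_eq, sum_abs_insertNth]
            simp only [hadef] at hr; linarith
          have hrI : r ∈ Set.Icc (-(a z)) (a z) := by
            rw [Set.mem_Icc]
            exact ⟨neg_le_of_abs_le hr, le_of_abs_le hr⟩
          rw [Set.indicator_of_mem hrI, hgB, Set.indicator_of_mem hmem]
        · have hmem : (j.insertNth r z : Fin (n+1) → ℝ) ∉ B := by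
            simp only [hBdef, Set.mem_setOf_eq, sum_abs_insertNth]
            simp only [hadef] at hr; push_neg at hr ⊢; linarith
          have hrI : r ∉ Set.Icc (-(a z)) (a z) := by
            rw [Set.mem_Icc]; intro ⟨h1, h2⟩; exact hr (abs_le.mpr ⟨h1, h2⟩)
          rw [Set.indicator_of_notMem hrI, hgB, Set.indicator_of_notMem hmem, zero_mul]
      rw [hindic, integral_indicator measurableSet_Icc]
      by_cases hz : z ∈ B'
      · have hz' : ∑ k, |z k| ≤ σ := hz
        have ha0 : 0 ≤ a z := sub_nonneg.mpr hz'
        rw [MeasureTheory.integral_Icc_eq_integral_Ioc,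
          ← intervalIntegral.integral_of_le (by linarith : -(a z) ≤ a z)]
        have hderiv : ∀ r ∈ Set.uIcc (-(a z)) (a z),
            HasDerivAt (fun r : ℝ => -(V⁻¹ * φ (y - j.insertNth r z)))
              (V⁻¹ * φ' (y - j.insertNth r z)) r := by
          intro r _
          have hrepr : (fun r : ℝ => y - (j.insertNth r z : Fin (n+1) → ℝ))
              = fun r => (y - j.insertNth (0:ℝ) z) - r • (Pi.single j 1 : Fin (n+1) → ℝ) := by
            funext r; rw [insertNth_eq_base_add j r z, sub_add_eq_sub_sub]
          have h1 : HasDerivAt (fun r : ℝ => r • (Pi.single j 1 : Fin (n+1) → ℝ))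
              (Pi.single j 1) r := by
            simpa using (hasDerivAt_id r).smul_const (Pi.single j 1 : Fin (n+1) → ℝ)
          have hψ : HasDerivAt (fun r : ℝ => y - (j.insertNth r z : Fin (n+1) → ℝ))
              (-(Pi.single j 1 : Fin (n+1) → ℝ)) r := by
            rw [hrepr]; exact h1.const_sub _
          have hfd := ((hφ.differentiable (by simp)) (y - j.insertNth r z)).hasFDerivAt
          have hcomp := hfd.comp_hasDerivAt r hψ
          have hfin := (hcomp.const_mul V⁻¹).neg
          rw [map_neg, mul_neg, neg_neg] at hfin
          simpa [hφ'def, pderivDir, map_neg, Function.comp_def, mul_neg, neg_neg, Pi.neg_def] using hfin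
        have hcont : IntervalIntegrable (fun r : ℝ => V⁻¹ * φ' (y - j.insertNth r z))
            volume (-(a z)) (a z) :=
          (continuous_const.mul (hφ'cont.comp (continuous_const.sub (hinsc z)))).intervalIntegrable _ _
        rw [intervalIntegral.integral_eq_sub_of_hasDerivAt hderiv hcont]
        rw [hχ_mem z hz]
        simp only [hwdef]
        ring
      · have hz' : σ < ∑ k, |z k| := by
          simp only [hB'def, Set.mem_setOf_eq] at hz; exact lt_of_not_ge hz
        have ha0 : a z < 0 := sub_neg.mpr hz'
        rw [Set.Icc_eq_empty (by intro h; linarith [neg_lt_self (neg_pos.mpr ha0)] : ¬ -(a z) ≤ a z)]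
        rw [hχ_nmem z hz]
        simp
    -- the sliced convolution identity
    have keyΦ : ∀ y : Fin (n+1) → ℝ, (∫ t, g t * φ' (y - t))
        = V⁻¹ * ∫ z, χ z * (φ (y - w (-(a z)) z) - φ (y - w (a z) z)) := by
      intro y
      have hH : Integrable (fun t => g t * φ' (y - t)) := by
        refine Integrable.mono' (g := fun t => B.indicator (fun _ => V⁻¹) t * M)
          (hBind_int.mul_const M)
          (hgm.mul (hφ'cont.measurable.comp (measurable_const.sub measurable_id))).aestronglyMeasurable
          (Filter.Eventually.of_forall fun t => ?_)
        rw [Real.norm_eq_abs, abs_mul]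
        exact mul_le_mul (hgabs t) (by simpa [Real.norm_eq_abs] using hM (y - t))
          (abs_nonneg _) (hindnn B V⁻¹ (inv_nonneg.mpr hVpos.le) t)
      rw [integral_insertNth j _ hH, ← integral_const_mul]
      refine integral_congr_ae (Filter.Eventually.of_forall fun z => ?_)
      beta_reduce
      exact keyR y z
    -- per-slice translation identity
    have keyY : ∀ z : Fin n → ℝ,
        (∫ y, f y * (χ z * (φ (y - w (-(a z)) z) - φ (y - w (a z) z))))
          = ∫ x, (χ z * (f (x + w (-(a z)) z) - f (x + w (a z) z))) * φ x := by
      intro z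
      by_cases hz : z ∈ B'
      · simp only [hχ_mem z hz, one_mul]
        have tr : ∀ v : Fin (n+1) → ℝ, (∫ y, f y * φ (y - v)) = ∫ x, f (x + v) * φ x := by
          intro v
          rw [← integral_add_right_eq_self (fun y => f y * φ (y - v)) v]
          refine integral_congr_ae (Filter.Eventually.of_forall fun x => ?_)
          beta_reduce
          simp only [add_sub_cancel_right]
        have hbound : ∃ c, ∀ x, ‖f x‖ ≤ c := ⟨C, fun x => by simpa [Real.norm_eq_abs] using hfb x⟩
        have int1 : Integrable (fun y => f y * φ (y - w (-(a z)) z)) :=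
          (hφint.comp_sub_right _).bdd_mul hfm.aestronglyMeasurable (Filter.Eventually.of_forall hbound.choose_spec)
        have int2 : Integrable (fun y => f y * φ (y - w (a z) z)) :=
          (hφint.comp_sub_right _).bdd_mul hfm.aestronglyMeasurable (Filter.Eventually.of_forall hbound.choose_spec)
        have int3 : Integrable (fun x => f (x + w (-(a z)) z) * φ x) :=
          hφint.bdd_mul ((hfm.comp (measurable_add_const _)).aestronglyMeasurable)
            (Filter.Eventually.of_forall fun x => by simpa [Real.norm_eq_abs] using hfb _)
        have int4 : Integrable (fun x => f (x + w (a z) z) * φ x) :=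
          hφint.bdd_mul ((hfm.comp (measurable_add_const _)).aestronglyMeasurable)
            (Filter.Eventually.of_forall fun x => by simpa [Real.norm_eq_abs] using hfb _)
        calc (∫ y, f y * (φ (y - w (-(a z)) z) - φ (y - w (a z) z)))
            = ∫ y, (f y * φ (y - w (-(a z)) z) - f y * φ (y - w (a z) z)) := by
              refine integral_congr_ae (Filter.Eventually.of_forall fun yy => ?_); ring
          _ = (∫ y, f y * φ (y - w (-(a z)) z)) - ∫ y, f y * φ (y - w (a z) z) :=
              integral_sub int1 int2
          _ = (∫ x, f (x + w (-(a z)) z) * φ x) - ∫ x, f (x + w (a z) z) * φ x := by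
              rw [tr, tr]
          _ = ∫ x, (f (x + w (-(a z)) z) - f (x + w (a z) z)) * φ x := by
              rw [← integral_sub int3 int4]
              refine integral_congr_ae (Filter.Eventually.of_forall fun x => ?_); ring
      · simp [hχ_nmem z hz]
    -- integrability for the four Fubini swaps
    have P1 : Integrable (Function.uncurry fun x t : Fin (n+1) → ℝ =>
        f (x + t) * g t * φ' x) (volume.prod volume) := by
      have hmeas : Measurable (Function.uncurry fun x t : Fin (n+1) → ℝ =>
          f (x + t) * g t * φ' x) :=
        ((hfm.comp (measurable_fst.add measurable_snd)).mul (hgm.comp measurable_snd)).mul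
          (hφ'cont.measurable.comp measurable_fst)
      refine Integrable.mono'
        (g := fun p => (C * ‖φ' p.1‖) * (B.indicator (fun _ => V⁻¹) p.2))
        ((hφ'int.norm.const_mul C).mul_prod hBind_int)
        hmeas.aestronglyMeasurable (Filter.Eventually.of_forall ?_)
      rintro ⟨x, t⟩
      simp only [Function.uncurry]
      rw [Real.norm_eq_abs, abs_mul, abs_mul]
      have h1 : |f (x + t)| * |g t| ≤ C * B.indicator (fun _ => V⁻¹) t :=
        mul_le_mul (hfb _) (hgabs t) (abs_nonneg _) hC
      calc |f (x + t)| * |g t| * |φ' x|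
          ≤ (C * B.indicator (fun _ => V⁻¹) t) * |φ' x| :=
            mul_le_mul_of_nonneg_right h1 (abs_nonneg _)
        _ = (C * ‖φ' x‖) * B.indicator (fun _ => V⁻¹) t := by
            rw [Real.norm_eq_abs]; ring
    have P2 : Integrable (Function.uncurry fun (t y : Fin (n+1) → ℝ) =>
        g t * (f y * φ' (y - t))) (volume.prod volume) := by
      have hmeas : Measurable (Function.uncurry fun (t y : Fin (n+1) → ℝ) =>
          g t * (f y * φ' (y - t))) :=
        (hgm.comp measurable_fst).mul ((hfm.comp measurable_snd).mul
          (hφ'cont.measurable.comp (measurable_snd.sub measurable_fst)))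
      refine Integrable.mono'
        (g := fun p => (B.indicator (fun _ => V⁻¹) p.1) *
          ((C * M) * (K' + B).indicator (fun _ => (1:ℝ)) p.2))
        (hBind_int.mul_prod (hK'Bind.const_mul (C * M)))
        hmeas.aestronglyMeasurable (Filter.Eventually.of_forall ?_)
      rintro ⟨t, y⟩
      simp only [Function.uncurry]
      by_cases ht : t ∈ B
      · by_cases hy : y ∈ K' + B
        · rw [Real.norm_eq_abs, abs_mul, abs_mul, Set.indicator_of_mem hy]
          refine mul_le_mul (hgabs t) ?_ (by positivity) (hindnn B _ (inv_nonneg.mpr hVpos.le) t)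
          rw [mul_one]
          exact mul_le_mul (hfb y) (by simpa [Real.norm_eq_abs] using hM (y - t))
            (abs_nonneg _) hC
        · have hz : φ' (y - t) = 0 := by
            apply image_eq_zero_of_notMem_tsupport
            intro hmem
            exact hy (by simpa using Set.add_mem_add hmem ht)
          rw [hz]
          simp only [mul_zero, norm_zero]
          exact mul_nonneg (hindnn B _ (inv_nonneg.mpr hVpos.le) t)
            (mul_nonneg (by positivity) (hindnn _ _ zero_le_one y))
      · have hg0 : g t = 0 := by rw [hgB]; exact Set.indicator_of_notMem ht _
        rw [hg0]
        simp only [zero_mul, norm_zero]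
        exact mul_nonneg (hindnn B _ (inv_nonneg.mpr hVpos.le) t)
          (mul_nonneg (by positivity) (hindnn _ _ zero_le_one y))
    have P4 : Integrable (Function.uncurry fun (y : Fin (n+1) → ℝ) (z : Fin n → ℝ) =>
        f y * (χ z * (φ (y - w (-(a z)) z) - φ (y - w (a z) z)))) (volume.prod volume) := by
      have m1 : Measurable (fun p : (Fin (n+1) → ℝ) × (Fin n → ℝ) =>
          p.1 - w (-(a p.2)) p.2) := by
        refine measurable_fst.sub ?_
        have := hmw (-1)
        simpa [neg_one_mul] using this
      have m2 : Measurable (fun p : (Fin (n+1) → ℝ) × (Fin n → ℝ) =>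
          p.1 - w (a p.2) p.2) := by
        refine measurable_fst.sub ?_
        have := hmw 1
        simpa [one_mul] using this
      have hmeas : Measurable (Function.uncurry fun (y : Fin (n+1) → ℝ) (z : Fin n → ℝ) =>
          f y * (χ z * (φ (y - w (-(a z)) z) - φ (y - w (a z) z)))) :=
        (hfm.comp measurable_fst).mul ((hχmeas.comp measurable_snd).mul
          ((hφcont.measurable.comp m1).sub (hφcont.measurable.comp m2)))
      refine Integrable.mono'
        (g := fun p => ((C * (2 * Mφ)) * (K + B).indicator (fun _ => (1:ℝ)) p.1) * χ p.2)
        ((hKBind.const_mul (C * (2 * Mφ))).mul_prod hχint)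
        hmeas.aestronglyMeasurable (Filter.Eventually.of_forall ?_)
      rintro ⟨y, z⟩
      simp only [Function.uncurry]
      by_cases hz : z ∈ B'
      · have hz' : ∑ k, |z k| ≤ σ := hz
        have ha0 : 0 ≤ a z := sub_nonneg.mpr hz'
        have h1 : w (-(a z)) z ∈ B := hwB z hz _ (by rw [abs_neg, abs_of_nonneg ha0])
        have h2 : w (a z) z ∈ B := hwB z hz _ (by rw [abs_of_nonneg ha0])
        by_cases hy : y ∈ K + B
        · rw [hχ_mem z hz, Set.indicator_of_mem hy, Real.norm_eq_abs, abs_mul, abs_mul, abs_one,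
            one_mul, mul_one, mul_one]
          refine mul_le_mul (hfb y) ?_ (abs_nonneg _) hC
          calc |φ (y - w (-(a z)) z) - φ (y - w (a z) z)|
              ≤ |φ (y - w (-(a z)) z)| + |φ (y - w (a z) z)| := abs_sub _ _
            _ ≤ Mφ + Mφ := add_le_add (by simpa [Real.norm_eq_abs] using hMφ _)
                (by simpa [Real.norm_eq_abs] using hMφ _)
            _ = 2 * Mφ := by ring
        · have hz1 : φ (y - w (-(a z)) z) = 0 := by
            apply image_eq_zero_of_notMem_tsupport
            intro hmem
            exact hy (by simpa using Set.add_mem_add hmem h1)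
          have hz2 : φ (y - w (a z) z) = 0 := by
            apply image_eq_zero_of_notMem_tsupport
            intro hmem
            exact hy (by simpa using Set.add_mem_add hmem h2)
          rw [hz1, hz2]
          simp only [sub_zero, sub_self, mul_zero, norm_zero]
          refine mul_nonneg (mul_nonneg ?_ (Set.indicator_nonneg (fun _ _ => zero_le_one) y))
            (hχ01 z).1
          have : 0 ≤ 2 * Mφ := by linarith
          exact mul_nonneg hC this
      · rw [hχ_nmem z hz]
        simp only [zero_mul, mul_zero, norm_zero]
        exact le_rfl
    have P5 : Integrable (Function.uncurry fun (z : Fin n → ℝ) (x : Fin (n+1) → ℝ) =>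
        (χ z * (f (x + w (-(a z)) z) - f (x + w (a z) z))) * φ x) (volume.prod volume) := by
      have m1 : Measurable (fun p : (Fin n → ℝ) × (Fin (n+1) → ℝ) =>
          p.2 + w (-(a p.1)) p.1) := by
        refine measurable_snd.add ?_
        have := (hmw (-1)).comp (measurable_snd.prodMk measurable_fst)
        simpa [neg_one_mul, Function.comp_def] using this
      have m2 : Measurable (fun p : (Fin n → ℝ) × (Fin (n+1) → ℝ) =>
          p.2 + w (a p.1) p.1) := by
        refine measurable_snd.add ?_
        have := (hmw 1).comp (measurable_snd.prodMk measurable_fst)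
        simpa [one_mul, Function.comp_def] using this
      have hmeas : Measurable (Function.uncurry fun (z : Fin n → ℝ) (x : Fin (n+1) → ℝ) =>
          (χ z * (f (x + w (-(a z)) z) - f (x + w (a z) z))) * φ x) :=
        (((hχmeas.comp measurable_fst).mul
          ((hfm.comp m1).sub (hfm.comp m2))).mul (hφcont.measurable.comp measurable_snd))
      refine Integrable.mono'
        (g := fun p => ((2 * C) * χ p.1) * ‖φ p.2‖)
        ((hχint.const_mul (2 * C)).mul_prod hφint.norm)
        hmeas.aestronglyMeasurable (Filter.Eventually.of_forall ?_)
      rintro ⟨z, x⟩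
      simp only [Function.uncurry]
      by_cases hz : z ∈ B'
      · rw [hχ_mem z hz, one_mul, Real.norm_eq_abs, abs_mul, Real.norm_eq_abs, mul_one]
        refine mul_le_mul ?_ le_rfl (abs_nonneg _) (by linarith)
        calc |f (x + w (-(a z)) z) - f (x + w (a z) z)|
            ≤ |f (x + w (-(a z)) z)| + |f (x + w (a z) z)| := abs_sub _ _
          _ ≤ C + C := add_le_add (hfb _) (hfb _)
          _ = 2 * C := by ring
      · rw [hχ_nmem z hz]
        simp only [zero_mul, norm_zero, mul_zero]
        exact le_rfl
    -- the main computation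
    calc (∫ x, F x * φ' x)
        = ∫ x, ∫ t, f (x + t) * g t * φ' x := by
          refine integral_congr_ae (Filter.Eventually.of_forall fun x => ?_)
          beta_reduce
          rw [hF x, ← integral_mul_const]
      _ = ∫ t, ∫ x, f (x + t) * g t * φ' x := integral_integral_swap P1
      _ = ∫ t, g t * ∫ y, f y * φ' (y - t) := by
          refine integral_congr_ae (Filter.Eventually.of_forall fun t => ?_)
          beta_reduce
          rw [← integral_const_mul,
            ← integral_add_right_eq_self (fun y => g t * (f y * φ' (y - t))) t]
          refine integral_congr_ae (Filter.Eventually.of_forall fun x => ?_)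
          beta_reduce
          simp only [add_sub_cancel_right]; ring
      _ = ∫ t, ∫ y, g t * (f y * φ' (y - t)) := by
          refine integral_congr_ae (Filter.Eventually.of_forall fun t => ?_)
          beta_reduce
          exact (integral_const_mul _ _).symm
      _ = ∫ y, ∫ t, g t * (f y * φ' (y - t)) := integral_integral_swap P2
      _ = ∫ y, V⁻¹ * ∫ z, f y * (χ z * (φ (y - w (-(a z)) z) - φ (y - w (a z) z))) := by
          refine integral_congr_ae (Filter.Eventually.of_forall fun y => ?_)
          beta_reduce
          have h1 : (∫ t, g t * (f y * φ' (y - t))) = f y * ∫ t, g t * φ' (y - t) := by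
            rw [← integral_const_mul (f y) (fun t => g t * φ' (y - t))]
            refine integral_congr_ae (Filter.Eventually.of_forall fun t => ?_)
            beta_reduce
            ring
          rw [h1, keyΦ y, mul_left_comm]
          congr 1
          exact (integral_const_mul _ _).symm
      _ = V⁻¹ * ∫ y, ∫ z, f y * (χ z * (φ (y - w (-(a z)) z) - φ (y - w (a z) z))) :=
          integral_const_mul _ _
      _ = V⁻¹ * ∫ z, ∫ y, f y * (χ z * (φ (y - w (-(a z)) z) - φ (y - w (a z) z))) := by
          rw [integral_integral_swap P4]
      _ = V⁻¹ * ∫ z, ∫ x, (χ z * (f (x + w (-(a z)) z) - f (x + w (a z) z))) * φ x := by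
          congr 1
          exact integral_congr_ae (Filter.Eventually.of_forall fun z => keyY z)
      _ = V⁻¹ * ∫ x, ∫ z, (χ z * (f (x + w (-(a z)) z) - f (x + w (a z) z))) * φ x := by
          rw [integral_integral_swap P5]
      _ = ∫ x, (-(D x)) * φ x := by
          rw [← integral_const_mul]
          refine integral_congr_ae (Filter.Eventually.of_forall fun x => ?_)
          beta_reduce
          rw [integral_mul_const]
          have hneg : (∫ z, χ z * (f (x + w (-(a z)) z) - f (x + w (a z) z)))
              = - ∫ z, χ z * (f (x + w (a z) z) - f (x + w (-(a z)) z)) := by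
            rw [← integral_neg]
            refine integral_congr_ae (Filter.Eventually.of_forall fun z => ?_); ring
          rw [hneg]
          simp only [hDdef]
          ring
      _ = - ∫ x, D x * φ x := by
          rw [← integral_neg]
          refine integral_congr_ae (Filter.Eventually.of_forall fun x => ?_); ring
end

section
/- Let r, d, n ∈ ℕ with r, d ≥ 1, let ε ∈ (0, δ] for some δ ∈ (0,1), and let x₁,…,xₙ ∈ ℝ^d. Suppose that for ρ = (ε/δ)^{1/r}(dr)^{1−1/r} we have ρ ≤ dr, and suppose there exists f: ℝ^d → ℝ with f(x_i) = 0 for all i, 0 ≤ f ≤ 1, f(x) = 1 whenever dist₁(x, {x₁,…,xₙ}) > 3ρ, and ‖D^β f‖_∞ ≤ δ/ε for all multi-indices |β|₁ ≤ r. If every such normalized function f* = f·(ε/δ) with sup-norm-scaled derivatives at most 1 has integral at most ε over D ⊆ ℝ^d of volume 1, then n ≥ (1−δ)·(6e·r^{1−1/r})^{−d}·(δd/ε)^{d/r}. -/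
open MeasureTheory

/-- The ℓ1-distance from a point `x` to a set `A` in ℝ^d. -/
noncomputable def l1dist {d : ℕ} (x : Fin d → ℝ) (A : Set (Fin d → ℝ)) : ℝ :=
  sInf ((fun y => ∑ j, |x j - y j|) '' A)

/-- Iterated partial derivative of a smooth function along a list of coordinate
directions (a multi-index of order the length of the list). -/
noncomputable def derivAlong {d : ℕ} : List (Fin d) → ((Fin d → ℝ) → ℝ) → (Fin d → ℝ) → ℝ
  | [], φ => φ
  | j :: L, φ => fun x => fderiv ℝ (derivAlong L φ) x (Pi.single j 1)

/-- `Df` is the weak partial derivative of `f` of order given by the list `L` of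
coordinate directions. -/
def IsWeakDeriv {d : ℕ} (L : List (Fin d)) (f Df : (Fin d → ℝ) → ℝ) : Prop :=
  ∀ φ : (Fin d → ℝ) → ℝ, ContDiff ℝ (⊤ : ℕ∞) φ → HasCompactSupport φ →
    ∫ x, f x * derivAlong L φ x = (-1 : ℝ) ^ L.length * ∫ x, Df x * φ x

lemma l1ball_volume (d : ℕ) (hd : 1 ≤ d) (c : Fin d → ℝ) (R : ℝ) :
    volume {z : Fin d → ℝ | ∑ j, |z j - c j| ≤ R}
      = ENNReal.ofReal R ^ d * ENNReal.ofReal (2 ^ d / d.factorial) := by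
  haveI : Nonempty (Fin d) := ⟨⟨0, hd⟩⟩
  have hmp := measurePreserving_sub_right (volume : Measure (Fin d → ℝ)) c
  have hset : {z : Fin d → ℝ | ∑ j, |z j - c j| ≤ R}
      = (· - c) ⁻¹' {z : Fin d → ℝ | ∑ j, |z j| ≤ R} := by
    ext z; simp [Pi.sub_apply]
  rw [hset, hmp.measure_preimage (by
      apply MeasurableSet.nullMeasurableSet
      exact measurableSet_le (by fun_prop) measurable_const)]
  have := MeasureTheory.volume_sum_rpow_le (ι := Fin d) (p := (1:ℝ)) le_rfl R
  simp only [Real.rpow_one, ne_eq, one_ne_zero, not_false_iff, div_one,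
    Fintype.card_fin] at this
  rw [this]
  norm_num [Real.Gamma_two, Real.Gamma_nat_eq_factorial]


/-- The lower bound n ≥ (1−δ)(6e r^{1−1/r})^{−d}(δd/ε)^{d/r} for the number of points,
derived from the existence of a fooling function: f vanishes at the points x₁,…,xₙ,
takes values in [0,1], equals 1 at ℓ1-distance more than 3ρ from the points
(with ρ = (ε/δ)^{1/r}(dr)^{1−1/r} ≤ dr), has all weak derivatives of order up to r
bounded by δ/ε, and its normalization f·(ε/δ) has integral at most ε over a set D
of volume 1. -/
theorem lower_bound_points (d r n : ℕ) (hd : 1 ≤ d) (hr : 1 ≤ r) (hn : 1 ≤ n)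
    (δ ε : ℝ) (hδ : δ ∈ Set.Ioo (0 : ℝ) 1) (hε : ε ∈ Set.Ioc (0 : ℝ) δ)
    (x : Fin n → Fin d → ℝ)
    (D : Set (Fin d → ℝ)) (hD : MeasurableSet D) (hvol : volume D = 1)
    (hxD : ∀ i, x i ∈ D)
    (ρ : ℝ) (hρdef : ρ = (ε / δ) ^ ((1 : ℝ) / r) * ((d : ℝ) * r) ^ (1 - 1 / (r : ℝ)))
    (hρle : ρ ≤ (d : ℝ) * r)
    (f : (Fin d → ℝ) → ℝ) (hfm : Measurable f)
    (hf0 : ∀ i, f (x i) = 0)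
    (hf01 : ∀ z, f z ∈ Set.Icc (0 : ℝ) 1)
    (hf1 : ∀ z, 3 * ρ < l1dist z (Set.range x) → f z = 1)
    (hfderiv : ∀ L : List (Fin d), L.length ≤ r →
      ∃ Df : (Fin d → ℝ) → ℝ, IsWeakDeriv L f Df ∧ ∀ z, |Df z| ≤ δ / ε)
    (hint : ∫ z in D, f z * (ε / δ) ≤ ε) :
    (1 - δ) * ((6 * Real.exp 1 * (r : ℝ) ^ (1 - 1 / (r : ℝ)))⁻¹) ^ d *
      (δ * d / ε) ^ ((d : ℝ) / r) ≤ n := by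
  obtain ⟨hδ0, hδ1⟩ := hδ
  obtain ⟨hε0, hεδ⟩ := hε
  have hd0 : (0:ℝ) < d := by exact_mod_cast hd
  have hr0 : (0:ℝ) < r := by exact_mod_cast hr
  have he : (0:ℝ) < Real.exp 1 := Real.exp_pos 1
  have hρ0 : 0 < ρ := by rw [hρdef]; positivity
  -- the union of l1-balls
  set U : Set (Fin d → ℝ) := ⋃ i, {z | ∑ j, |z j - x i j| ≤ 3*ρ} with hUdef
  have hBm : ∀ i : Fin n, MeasurableSet {z : Fin d → ℝ | ∑ j, |z j - x i j| ≤ 3*ρ} :=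
    fun i => measurableSet_le (by fun_prop) measurable_const
  have hUm : MeasurableSet U := MeasurableSet.iUnion hBm
  -- f = 1 outside U
  have hfU : ∀ z, z ∉ U → f z = 1 := by
    intro z hz
    apply hf1
    simp only [hUdef, Set.mem_iUnion, not_exists, Set.mem_setOf_eq, not_le] at hz
    have hne : ((fun y => ∑ j, |z j - y j|) '' Set.range x).Nonempty :=
      ⟨_, ⟨x ⟨0, hn⟩, Set.mem_range_self _, rfl⟩⟩
    have hfin : ((fun y => ∑ j, |z j - y j|) '' Set.range x).Finite :=
      (Set.finite_range x).image _
    obtain ⟨w, hw, heq⟩ := hne.csInf_mem hfin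
    obtain ⟨i, rfl⟩ := hw
    rw [l1dist, ← heq]
    simpa using hz i
  -- integral upper bound
  haveI : IsFiniteMeasure (volume.restrict D) := by
    constructor
    rw [Measure.restrict_apply_univ, hvol]
    exact ENNReal.one_lt_top
  have hIntf : IntegrableOn f D := by
    refine (integrable_const (1:ℝ)).mono' (hfm.aestronglyMeasurable) ?_
    filter_upwards with z
    rw [Real.norm_eq_abs, abs_le]
    exact ⟨by linarith [(hf01 z).1], (hf01 z).2⟩
  have hintδ : ∫ z in D, f z ≤ δ := by
    rw [integral_mul_const] at hint
    have hεδpos : 0 < ε / δ := by positivity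
    calc ∫ z in D, f z = ((∫ z in D, f z) * (ε / δ)) / (ε / δ) := by field_simp
    _ ≤ ε / (ε / δ) := by gcongr
    _ = δ := by field_simp
  -- integral lower bound
  have hvolDU : (volume (D \ U)).toReal ≤ ∫ z in D, f z := by
    calc (volume (D \ U)).toReal = ∫ _ in D \ U, (1:ℝ) := by
          rw [setIntegral_const, smul_eq_mul, mul_one]; rfl
      _ = ∫ z in D \ U, f z := by
          refine setIntegral_congr_fun (hD.diff hUm) fun z hz => (hfU z hz.2).symm
      _ ≤ ∫ z in D, f z := by
          refine setIntegral_mono_set hIntf ?_ (HasSubset.Subset.eventuallyLE Set.diff_subset)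
          filter_upwards with z using (hf01 z).1
  -- measure of U
  have hUvol : volume U ≤ (n : ENNReal) * (ENNReal.ofReal (3*ρ) ^ d * ENNReal.ofReal (2 ^ d / d.factorial)) := by
    refine (measure_iUnion_le _).trans ?_
    simp_rw [l1ball_volume d hd _ (3*ρ)]
    rw [tsum_fintype]
    simp [Finset.sum_const, nsmul_eq_mul]
  have hUfin : volume U ≠ ⊤ := by
    refine ne_top_of_le_ne_top ?_ hUvol
    exact ENNReal.mul_ne_top (by simp) (ENNReal.mul_ne_top (ENNReal.pow_ne_top ENNReal.ofReal_ne_top) (by simp))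
  have hDUfin : volume (D \ U) ≠ ⊤ := by
    refine ne_top_of_le_ne_top ?_ (measure_mono Set.diff_subset)
    rw [hvol]; simp
  have hsplit : (1 : ENNReal) ≤ volume (D \ U) + volume U := by
    rw [← hvol]
    refine (measure_mono (fun z hz => ?_)).trans (measure_union_le _ _)
    by_cases hzU : z ∈ U
    · exact Or.inr hzU
    · exact Or.inl ⟨hz, hzU⟩
  have hsplitR : (1 : ℝ) ≤ (volume (D \ U)).toReal + (volume U).toReal := by
    have h := ENNReal.toReal_mono (by
      exact ENNReal.add_ne_top.mpr ⟨hDUfin, hUfin⟩) hsplit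
    rwa [ENNReal.toReal_one, ENNReal.toReal_add hDUfin hUfin] at h
  have hUvolR : (volume U).toReal ≤ (n : ℝ) * ((6*ρ) ^ d / d.factorial) := by
    have h := ENNReal.toReal_mono (by
      exact ENNReal.mul_ne_top (by simp) (ENNReal.mul_ne_top (ENNReal.pow_ne_top ENNReal.ofReal_ne_top) (by simp))) hUvol
    rw [ENNReal.toReal_mul, ENNReal.toReal_mul, ENNReal.toReal_pow,
      ENNReal.toReal_ofReal (by positivity), ENNReal.toReal_ofReal (by positivity),
      ENNReal.toReal_natCast] at h
    calc (volume U).toReal ≤ (n:ℝ) * ((3*ρ)^d * (2^d / d.factorial)) := h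
      _ = (n : ℝ) * ((6*ρ) ^ d / d.factorial) := by
          rw [show ((6:ℝ)*ρ)^d = (3*ρ)^d * 2^d by rw [← mul_pow]; ring_nf]
          ring
  -- combine: 1 - δ ≤ n * (6ρ)^d / d!
  have hmain : 1 - δ ≤ (n : ℝ) * ((6*ρ) ^ d / d.factorial) := by
    have := hvolDU.trans hintδ
    linarith
  -- identity
  have hId : ((6 * Real.exp 1 * (r : ℝ) ^ (1 - 1 / (r : ℝ)))⁻¹) ^ d *
      (δ * d / ε) ^ ((d : ℝ) / r) = ((d : ℝ) / (6 * Real.exp 1 * ρ)) ^ d := by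
    set a : ℝ := (δ / ε) ^ ((1:ℝ) / r) with ha
    set b : ℝ := (ε / δ) ^ ((1:ℝ) / r) with hb
    set cc : ℝ := (r : ℝ) ^ (1 - 1 / (r:ℝ)) with hc
    set p : ℝ := (d : ℝ) ^ ((1:ℝ) / r) with hp
    set q : ℝ := (d : ℝ) ^ (1 - 1 / (r:ℝ)) with hq
    have ha0 : 0 < a := Real.rpow_pos_of_pos (by positivity) _
    have hb0 : 0 < b := Real.rpow_pos_of_pos (by positivity) _
    have hc0 : 0 < cc := Real.rpow_pos_of_pos hr0 _
    have hp0 : 0 < p := Real.rpow_pos_of_pos hd0 _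
    have hq0 : 0 < q := Real.rpow_pos_of_pos hd0 _
    have hab : a * b = 1 := by
      rw [ha, hb, ← Real.mul_rpow (by positivity) (by positivity)]
      rw [show δ / ε * (ε / δ) = 1 by field_simp]
      exact Real.one_rpow _
    have hpq : p * q = (d : ℝ) := by
      rw [hp, hq, ← Real.rpow_add hd0]; norm_num
    have hmulr : ((d:ℝ) * r) ^ (1 - 1 / (r:ℝ)) = q * cc :=
      Real.mul_rpow hd0.le hr0.le
    have hdr : (δ * d / ε) ^ ((d:ℝ) / r) = (a * p) ^ d := by
      have h1 : δ * d / ε = (δ / ε) * d := by ring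
      have h2 : (δ * d / ε) ^ ((1:ℝ) / r) = a * p := by
        rw [h1, Real.mul_rpow (by positivity) hd0.le]
      have h3 : ((d:ℝ) / r) = (1 / r) * (d:ℕ) := by ring
      rw [h3, Real.rpow_mul (by positivity), Real.rpow_natCast, h2]
    rw [hdr, hρdef, hmulr, ← mul_pow]
    congr 1
    rw [_root_.eq_div_iff (by positivity)]
    field_simp
    linear_combination (p*q)*hab + hpq
  -- factorial bound
  have hfact : ((d:ℝ) / Real.exp 1) ^ d ≤ d.factorial := by
    have h := Real.pow_div_factorial_le_exp (x := (d:ℝ)) hd0.le d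
    have hed : Real.exp (d : ℝ) = Real.exp 1 ^ d := by
      rw [← Real.exp_nat_mul]; norm_num
    rw [div_pow]
    rw [div_le_iff₀ (by positivity)] at h ⊢
    rw [hed] at h
    calc (d:ℝ)^d ≤ Real.exp 1 ^ d * d.factorial := by
          have : (0:ℝ) < (d.factorial : ℝ) := by positivity
          nlinarith [h]
      _ = (d.factorial : ℝ) * Real.exp 1 ^ d := by ring
  -- finish
  have h6ρ : (0:ℝ) < (6*ρ)^d := by positivity
  have hfrac : ((d : ℝ) / (6 * Real.exp 1 * ρ)) ^ d ≤ (d.factorial : ℝ) / (6*ρ)^d := by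
    have heq : ((d : ℝ) / (6 * Real.exp 1 * ρ)) ^ d = ((d:ℝ)/Real.exp 1)^d / (6*ρ)^d := by
      rw [div_pow, div_pow, div_div]
      congr 1
      rw [← mul_pow]; ring_nf
    rw [heq]
    gcongr
  have hnge : (1 - δ) * ((d.factorial : ℝ) / (6*ρ)^d) ≤ n := by
    have hfd : (0:ℝ) < (d.factorial : ℝ) := by positivity
    calc (1 - δ) * ((d.factorial : ℝ) / (6*ρ)^d)
        ≤ ((n:ℝ) * ((6*ρ)^d / d.factorial)) * ((d.factorial : ℝ) / (6*ρ)^d) :=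
          mul_le_mul_of_nonneg_right hmain (by positivity)
      _ = n := by field_simp
  rw [mul_assoc, hId]
  calc (1 - δ) * ((d : ℝ) / (6 * Real.exp 1 * ρ)) ^ d
      ≤ (1 - δ) * ((d.factorial : ℝ) / (6*ρ)^d) := by
        apply mul_le_mul_of_nonneg_left hfrac (by linarith)
    _ ≤ n := hnge
end

section
/- Let Q_m(f) = ∑_{i=1}^m a_i f(t_i) be a univariate quadrature rule with nodes t_i ∈ [0,1] and weights a_i ∈ ℝ, exact on constants (∑ a_i = 1), with worst case error e₁ = sup{|∫₀¹ f − Q_m(f)| : f ∈ C^r([0,1]), ‖f‖_{C^r} ≤ 1} over the unit ball of C^r([0,1]). Let A = ∑_{i=1}^m |a_i| and let Q_m^d be the d-fold tensor product rule. Then the worst case error of Q_m^d over the unit ball of C^r([0,1]^d) (all partial derivatives of total order ≤ r bounded by 1 in sup-norm) is at most (∑_{j=0}^{d−1} A^j)·e₁. In particular, if all a_i ≥ 0 then the error is at most d·e₁. -/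
/-!
Induction on the dimension. Writing `x = (s, y)` with `s ∈ [0,1]`, Fubini and the splitting
`Q^{d+1} = Q ⊗ Q^d` give `∫ f - Q^{d+1} f = ∫₀¹ (F - G) + (∫₀¹ G - Q G)`, where
`F s = ∫ f (s, y) dy` and `G s = Q^d (f (s, ·))`. The first term is at most `(∑_{j<d} A^j) e₁`
by induction, applied to the slices `f (s, ·)`. The `k`-th derivative of `G` is `Q^d` applied
to `∂ₛ^k f (s, ·)`, so it is bounded by `A^d`; hence `G / A^d` lies in the unit ball of
`C^r([0,1])` and the second term is at most `A^d e₁`.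
-/

open MeasureTheory

/-- The unit ball of C^r([0,1]^d): r-times continuously differentiable functions
whose partial derivatives of total order ≤ r are bounded by 1 on the cube. -/
def CrUnitBall (d r : ℕ) : Set ((Fin d → ℝ) → ℝ) :=
  {f | ContDiff ℝ r f ∧ ∀ L : List (Fin d), L.length ≤ r →
    ∀ x ∈ Set.Icc (0 : Fin d → ℝ) 1, |derivAlong L f x| ≤ 1}

section FinCons

variable {E F : Type*} [NormedAddCommGroup E] [NormedSpace ℝ E] [NormedAddCommGroup F]
  [NormedSpace ℝ F]

theorem Pi.single_succ_eq_cons_zero {M : Type*} [Zero M] {n : ℕ} (j : Fin n) (x : M) :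
    (Pi.single j.succ x : Fin (n + 1) → M) = Fin.cons 0 (Pi.single j x) := by
  ext k
  refine Fin.cases ?_ (fun i => ?_) k
  · simp
  · simp [Pi.single_apply]

theorem hasFDerivAt_finCons_right {n : ℕ} (s : E) (y : Fin n → E) :
    HasFDerivAt (fun y : Fin n → E => (Fin.cons s y : Fin (n + 1) → E))
      ((0 : (Fin n → E) →L[ℝ] E).finCons (ContinuousLinearMap.id ℝ _)) y :=
  (hasFDerivAt_const s y).finCons (hasFDerivAt_id y)

theorem hasDerivAt_finCons_left {n : ℕ} (c : Fin n → ℝ) (s : ℝ) :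
    HasDerivAt (fun s : ℝ => (Fin.cons s c : Fin (n + 1) → ℝ)) (Pi.single 0 1) s := by
  have := (hasDerivAt_id s).hasFDerivAt.finCons (F' := fun _ => ℝ) (hasFDerivAt_const c s)
  refine this.hasDerivAt.congr_deriv ?_
  ext k
  refine Fin.cases ?_ (fun i => ?_) k <;> simp

theorem fderiv_comp_finCons_right {n : ℕ} {g : (Fin (n + 1) → E) → F} {s : E} {y : Fin n → E}
    (hg : DifferentiableAt ℝ g (Fin.cons s y)) (v : Fin n → E) :
    fderiv ℝ (fun y => g (Fin.cons s y)) y v = fderiv ℝ g (Fin.cons s y) (Fin.cons 0 v) := by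
  have h := (hg.hasFDerivAt.comp y (hasFDerivAt_finCons_right s y)).fderiv
  rw [Function.comp_def] at h
  rw [h]
  rfl

theorem contDiff_finCons_right {n : ℕ} {k : WithTop ℕ∞} (s : E) :
    ContDiff ℝ k (fun y : Fin n → E => (Fin.cons s y : Fin (n + 1) → E)) := by
  rw [contDiff_pi]
  refine Fin.cases ?_ (fun i => ?_)
  · simpa using contDiff_const
  · simpa using contDiff_apply ℝ E i

theorem contDiff_finCons_left {n : ℕ} {k : WithTop ℕ∞} (c : Fin n → E) :
    ContDiff ℝ k (fun s : E => (Fin.cons s c : Fin (n + 1) → E)) := by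
  rw [contDiff_pi]
  refine Fin.cases ?_ (fun i => ?_)
  · simp only [Fin.cons_zero]
    exact contDiff_id
  · simpa using contDiff_const

end FinCons

theorem contDiff_derivAlong {d n : ℕ} {f : (Fin d → ℝ) → ℝ} (hf : ContDiff ℝ n f) :
    ∀ {L : List (Fin d)}, L.length ≤ n → ContDiff ℝ (n - L.length : ℕ) (derivAlong L f)
  | [], _ => by simpa [derivAlong] using hf
  | j :: L, hL => by
    have hL' : L.length < n := by simpa using hL
    have hfderiv : ContDiff ℝ (n - (j :: L).length : ℕ) (fderiv ℝ (derivAlong L f)) :=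
      (contDiff_derivAlong hf hL'.le).fderiv_right
        (by simp only [List.length_cons]; norm_cast; omega)
    exact hfderiv.clm_apply contDiff_const

theorem differentiable_derivAlong {d n : ℕ} {f : (Fin d → ℝ) → ℝ} (hf : ContDiff ℝ n f)
    {L : List (Fin d)} (hL : L.length < n) : Differentiable ℝ (derivAlong L f) :=
  (contDiff_derivAlong hf hL.le).differentiable (by norm_cast; omega)

theorem derivAlong_comp_finCons {d n : ℕ} {f : (Fin (d + 1) → ℝ) → ℝ} (hf : ContDiff ℝ n f)
    (s : ℝ) :
    ∀ {L : List (Fin d)}, L.length ≤ n →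
      derivAlong L (fun y => f (Fin.cons s y)) =
        fun y => derivAlong (L.map Fin.succ) f (Fin.cons s y)
  | [], _ => rfl
  | j :: L, hL => by
    have hL' : L.length < n := by simpa using hL
    ext y
    change fderiv ℝ (derivAlong L fun y => f (Fin.cons s y)) y (Pi.single j 1) = _
    rw [derivAlong_comp_finCons hf s hL'.le,
      fderiv_comp_finCons_right (differentiable_derivAlong hf (by simpa using hL') _),
      ← Pi.single_succ_eq_cons_zero]
    rfl

theorem Fin.cons_mem_Icc_zero_one {α : Type*} [Preorder α] [Zero α] [One α] {d : ℕ} {s : α}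
    {y : Fin d → α} (hs : s ∈ Set.Icc 0 1) (hy : y ∈ Set.Icc 0 1) :
    (Fin.cons s y : Fin (d + 1) → α) ∈ Set.Icc 0 1 := by
  rw [← Fin.cons_self_tail (0 : Fin (d + 1) → α), ← Fin.cons_self_tail (1 : Fin (d + 1) → α)]
  exact ⟨Fin.cons_le_cons.2 ⟨hs.1, hy.1⟩, Fin.cons_le_cons.2 ⟨hs.2, hy.2⟩⟩

theorem comp_finCons_mem_CrUnitBall {d r : ℕ} {f : (Fin (d + 1) → ℝ) → ℝ}
    (hf : f ∈ CrUnitBall (d + 1) r) {s : ℝ} (hs : s ∈ Set.Icc 0 1) :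
    (fun y => f (Fin.cons s y)) ∈ CrUnitBall d r := by
  refine ⟨hf.1.comp (contDiff_finCons_right s), fun L hL y hy => ?_⟩
  rw [derivAlong_comp_finCons hf.1 s hL]
  exact hf.2 _ (by simpa using hL) _ (Fin.cons_mem_Icc_zero_one hs hy)

noncomputable def tensorQuad {α : Type*} {m : ℕ} (a : Fin m → ℝ) (t : Fin m → α) (d : ℕ)
    (g : (Fin d → α) → ℝ) : ℝ :=
  ∑ i : Fin d → Fin m, (∏ j, a (i j)) * g (fun j => t (i j))

section TensorQuad

variable {α : Type*} {m : ℕ} (a : Fin m → ℝ)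

theorem tensorQuad_succ (t : Fin m → α) {d : ℕ} (g : (Fin (d + 1) → α) → ℝ) :
    tensorQuad a t (d + 1) g = ∑ i, a i * tensorQuad a t d (fun y => g (Fin.cons (t i) y)) := by
  rw [tensorQuad, ← (Fin.consEquiv fun _ => Fin m).sum_comp, Fintype.sum_prod_type]
  refine Finset.sum_congr rfl fun i _ => ?_
  rw [tensorQuad, Finset.mul_sum]
  refine Finset.sum_congr rfl fun I _ => ?_
  have hnodes : (fun j => t ((Fin.cons i I : Fin (d + 1) → Fin m) j)) =
      Fin.cons (t i) (fun j => t (I j)) := by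
    ext j
    refine Fin.cases ?_ (fun j => ?_) j <;> simp
  simp only [Fin.consEquiv_apply, hnodes, Fin.prod_univ_succ, Fin.cons_zero, Fin.cons_succ]
  ring

theorem abs_tensorQuad_le {t : Fin m → α} {d : ℕ} {s : Set α} (ht : ∀ i, t i ∈ s)
    {g : (Fin d → α) → ℝ} {M : ℝ} (hg : ∀ y : Fin d → α, (∀ j, y j ∈ s) → |g y| ≤ M) :
    |tensorQuad a t d g| ≤ (∑ i, |a i|) ^ d * M := by
  calc |tensorQuad a t d g|
      ≤ ∑ i : Fin d → Fin m, |(∏ j, a (i j)) * g (fun j => t (i j))| :=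
        Finset.abs_sum_le_sum_abs _ _
    _ ≤ ∑ i : Fin d → Fin m, (∏ j, |a (i j)|) * M := by
        refine Finset.sum_le_sum fun i _ => ?_
        rw [abs_mul, Finset.abs_prod]
        exact mul_le_mul_of_nonneg_left (hg _ fun j => ht _)
          (Finset.prod_nonneg fun j _ => abs_nonneg _)
    _ = (∑ i, |a i|) ^ d * M := by
        rw [← Finset.sum_mul, Finset.sum_pow', Fintype.piFinset_univ]

theorem hasDerivAt_tensorQuad_comp_finCons {d : ℕ} (t : Fin m → ℝ)
    {g : (Fin (d + 1) → ℝ) → ℝ} (hg : Differentiable ℝ g) (s : ℝ) :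
    HasDerivAt (fun s => tensorQuad a t d fun y => g (Fin.cons s y))
      (tensorQuad a t d fun y => fderiv ℝ g (Fin.cons s y) (Pi.single 0 1)) s :=
  HasDerivAt.fun_sum fun _ _ =>
    ((hg _).hasFDerivAt.comp_hasDerivAt s (hasDerivAt_finCons_left _ s)).const_mul _

theorem iteratedDeriv_tensorQuad_comp_finCons {d : ℕ} (t : Fin m → ℝ)
    {f : (Fin (d + 1) → ℝ) → ℝ} :
    ∀ {k : ℕ}, ContDiff ℝ k f →
      iteratedDeriv k (fun s => tensorQuad a t d fun y => f (Fin.cons s y)) =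
        fun s => tensorQuad a t d fun y => derivAlong (List.replicate k 0) f (Fin.cons s y)
  | 0, _ => by simp [derivAlong]
  | k + 1, hf => by
    rw [iteratedDeriv_succ,
      iteratedDeriv_tensorQuad_comp_finCons t (hf.of_le (by norm_cast; omega))]
    ext s
    exact (hasDerivAt_tensorQuad_comp_finCons a t
      (differentiable_derivAlong hf (by simp)) s).deriv

theorem contDiff_tensorQuad_comp_finCons {d : ℕ} (t : Fin m → ℝ) {n : WithTop ℕ∞}
    {f : (Fin (d + 1) → ℝ) → ℝ} (hf : ContDiff ℝ n f) :
    ContDiff ℝ n (fun s => tensorQuad a t d fun y => f (Fin.cons s y)) :=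
  ContDiff.sum fun _ _ => contDiff_const.mul (hf.comp (contDiff_finCons_left _))

end TensorQuad

def WorstCaseErrorLE (r : ℕ) {m : ℕ} (a t : Fin m → ℝ) (e : ℝ) : Prop :=
  ∀ f : ℝ → ℝ, ContDiff ℝ r f →
    (∀ k ≤ r, ∀ x ∈ Set.Icc (0 : ℝ) 1, |iteratedDeriv k f x| ≤ 1) →
    |(∫ x in (0 : ℝ)..1, f x) - ∑ i, a i * f (t i)| ≤ e

theorem WorstCaseErrorLE.abs_sub_le {r m : ℕ} {a t : Fin m → ℝ} {e : ℝ}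
    (he : WorstCaseErrorLE r a t e) {g : ℝ → ℝ} (hg : ContDiff ℝ r g) {B : ℝ} (hB : 0 < B)
    (hgB : ∀ k ≤ r, ∀ x ∈ Set.Icc (0 : ℝ) 1, |iteratedDeriv k g x| ≤ B) :
    |(∫ x in (0 : ℝ)..1, g x) - ∑ i, a i * g (t i)| ≤ B * e := by
  have hscaled := he (fun x => B⁻¹ * g x) (contDiff_const.mul hg) fun k hk x hx => by
    rw [iteratedDeriv_const_mul_field, abs_mul, abs_inv, abs_of_pos hB, inv_mul_le_iff₀ hB,
      mul_one]
    exact hgB k hk x hx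
  have hlinear : (∫ x in (0 : ℝ)..1, B⁻¹ * g x) - ∑ i, a i * (B⁻¹ * g (t i)) =
      B⁻¹ * ((∫ x in (0 : ℝ)..1, g x) - ∑ i, a i * g (t i)) := by
    rw [intervalIntegral.integral_const_mul, mul_sub, Finset.mul_sum]
    simp only [mul_left_comm]
  rwa [hlinear, abs_mul, abs_inv, abs_of_pos hB, inv_mul_le_iff₀ hB] at hscaled

theorem integral_pi_fin_succ {X F : Type*} [MeasurableSpace X] [NormedAddCommGroup F]
    [NormedSpace ℝ F] {n : ℕ}
    (μ : Fin (n + 1) → Measure X) [∀ i, SigmaFinite (μ i)]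
    {f : (Fin (n + 1) → X) → F} (hf : Integrable f (Measure.pi μ)) :
    ∫ x, f x ∂Measure.pi μ =
      ∫ s, ∫ y, f (Fin.cons s y) ∂Measure.pi (fun j => μ j.succ) ∂μ 0 := by
  have hmp := (measurePreserving_piFinSuccAbove μ 0).symm
  have hcons : ∀ z : X × (Fin n → X),
      (MeasurableEquiv.piFinSuccAbove (fun _ => X) 0).symm z = Fin.cons z.1 z.2 := fun z => by
    simp [MeasurableEquiv.piFinSuccAbove_symm_apply, Fin.insertNthEquiv, Fin.insertNth_zero']
  rw [← hmp.integral_comp', integral_prod]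
  · simp only [hcons, Fin.succAbove_zero]
  · exact (hmp.integrable_comp_emb (MeasurableEquiv.measurableEmbedding _)).2 hf

theorem volume_restrict_Icc_zero_one_eq_pi (n : ℕ) :
    volume.restrict (Set.Icc (0 : Fin n → ℝ) 1) =
      Measure.pi fun _ => volume.restrict (Set.Icc (0 : ℝ) 1) := by
  rw [← Set.pi_univ_Icc, volume_pi, Measure.restrict_pi_pi]
  rfl

theorem setIntegral_Icc_zero_one_fin_succ {n : ℕ} {f : (Fin (n + 1) → ℝ) → ℝ}
    (hf : Continuous f) :
    ∫ x in Set.Icc 0 1, f x = ∫ s in Set.Icc 0 1, ∫ y in Set.Icc 0 1, f (Fin.cons s y) := by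
  have hint : IntegrableOn f (Set.Icc 0 1) := hf.continuousOn.integrableOn_compact isCompact_Icc
  rw [IntegrableOn, volume_restrict_Icc_zero_one_eq_pi] at hint
  rw [volume_restrict_Icc_zero_one_eq_pi, volume_restrict_Icc_zero_one_eq_pi,
    integral_pi_fin_succ _ hint]

theorem abs_integral_sub_tensorQuad_le {r m : ℕ} {a t : Fin m → ℝ}
    (ht : ∀ i, t i ∈ Set.Icc (0 : ℝ) 1) (hsum : ∑ i, a i = 1) {e : ℝ}
    (he : WorstCaseErrorLE r a t e) :
    ∀ {d : ℕ}, ∀ f ∈ CrUnitBall d r,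
      |(∫ x in Set.Icc (0 : Fin d → ℝ) 1, f x) - tensorQuad a t d f| ≤
        (∑ j ∈ Finset.range d, (∑ i, |a i|) ^ j) * e
  | 0, f, _ => by
    have hcube : Set.Icc (0 : Fin 0 → ℝ) 1 = Set.univ :=
      Set.eq_univ_of_forall fun _ => ⟨(Subsingleton.elim _ _).le, (Subsingleton.elim _ _).le⟩
    have hconst : ∀ x, f x = f 0 := fun x => congrArg f (Subsingleton.elim x 0)
    rw [hcube]
    simp [integral_unique, tensorQuad, hconst, volume_pi, measureReal_def]
  | d + 1, f, hf => by
    set A := ∑ i, |a i|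
    set F := fun s => ∫ y in Set.Icc (0 : Fin d → ℝ) 1, f (Fin.cons s y)
    set G := fun s => tensorQuad a t d fun y => f (Fin.cons s y)
    have hA : 1 ≤ A := by
      calc (1 : ℝ) = |∑ i, a i| := by rw [hsum, abs_one]
        _ ≤ A := Finset.abs_sum_le_sum_abs _ _
    have hslice : ∀ s ∈ Set.Icc (0 : ℝ) 1, ‖F s - G s‖ ≤ (∑ j ∈ Finset.range d, A ^ j) * e :=
      fun s hs => abs_integral_sub_tensorQuad_le ht hsum he _ (comp_finCons_mem_CrUnitBall hf hs)
    have hF : Continuous F := continuous_parametric_integral_of_continuous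
      (f := fun s y => f (Fin.cons s y)) (hf.1.continuous.comp (by fun_prop)) isCompact_Icc
    have hG : ContDiff ℝ r G := contDiff_tensorQuad_comp_finCons a t hf.1
    have hGderiv : ∀ k ≤ r, ∀ s ∈ Set.Icc (0 : ℝ) 1, |iteratedDeriv k G s| ≤ A ^ d := by
      intro k hk s hs
      rw [iteratedDeriv_tensorQuad_comp_finCons a t (hf.1.of_le (by norm_cast)), ← mul_one (A ^ d)]
      exact abs_tensorQuad_le a ht fun y hy => hf.2 _ (by simpa using hk) _
        (Fin.cons_mem_Icc_zero_one hs ⟨fun j => (hy j).1, fun j => (hy j).2⟩)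
    have hslice_integral : |(∫ s in Set.Icc (0 : ℝ) 1, F s) - ∫ s in Set.Icc (0 : ℝ) 1, G s| ≤
        (∑ j ∈ Finset.range d, A ^ j) * e := by
      rw [← integral_sub (hF.integrableOn_Icc) (hG.continuous.integrableOn_Icc)]
      simpa using norm_setIntegral_le_of_norm_le_const (μ := volume) measure_Icc_lt_top hslice
    have hrule := he.abs_sub_le hG (pow_pos (one_pos.trans_le hA) d) hGderiv
    rw [intervalIntegral.integral_of_le zero_le_one, ← integral_Icc_eq_integral_Ioc] at hrule
    rw [setIntegral_Icc_zero_one_fin_succ hf.1.continuous, tensorQuad_succ, Finset.sum_range_succ,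
      add_mul]
    calc _ ≤ _ := abs_sub_le _ (∫ s in Set.Icc (0 : ℝ) 1, G s) _
      _ ≤ _ := add_le_add hslice_integral hrule

theorem tensor_product_rule_error_general (d r m : ℕ)
    (a t : Fin m → ℝ) (ht : ∀ i, t i ∈ Set.Icc (0 : ℝ) 1)
    (hsum : ∑ i, a i = 1)
    (e₁ : ℝ)
    (he₁ : ∀ f : ℝ → ℝ, ContDiff ℝ r f →
      (∀ k ≤ r, ∀ x ∈ Set.Icc (0 : ℝ) 1, |iteratedDeriv k f x| ≤ 1) →
      |(∫ x in (0 : ℝ)..1, f x) - ∑ i, a i * f (t i)| ≤ e₁)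
    (A : ℝ) (hA : A = ∑ i, |a i|) :
    (∀ f ∈ CrUnitBall d r,
      |(∫ x in Set.Icc (0 : Fin d → ℝ) 1, f x) -
          ∑ i : Fin d → Fin m, (∏ j, a (i j)) * f (fun j => t (i j))| ≤
        (∑ j ∈ Finset.range d, A ^ j) * e₁) ∧
    ((∀ i, 0 ≤ a i) → ∀ f ∈ CrUnitBall d r,
      |(∫ x in Set.Icc (0 : Fin d → ℝ) 1, f x) -
          ∑ i : Fin d → Fin m, (∏ j, a (i j)) * f (fun j => t (i j))| ≤ d * e₁) := by
  have herror := abs_integral_sub_tensorQuad_le ht hsum he₁ (d := d)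
  subst hA
  refine ⟨herror, fun hpos f hf => ?_⟩
  have hA : ∑ i, |a i| = 1 := by
    rw [← hsum]
    exact Finset.sum_congr rfl fun i _ => abs_of_nonneg (hpos i)
  simpa [hA, tensorQuad] using herror f hf

/-- If a univariate quadrature rule Q_m with nodes t_i ∈ [0,1] and weights a_i (summing
to 1) has worst case error at most e₁ on the unit ball of C^r([0,1]), then its d-fold
tensor product rule has worst case error at most (∑_{j<d} A^j)·e₁ on the unit ball of
C^r([0,1]^d), where A = ∑|a_i|; in particular at most d·e₁ when all weights are ≥ 0. -/
theorem tensor_product_rule_error (d r m : ℕ) (hd : 1 ≤ d) (hm : 1 ≤ m)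
    (a t : Fin m → ℝ) (ht : ∀ i, t i ∈ Set.Icc (0 : ℝ) 1)
    (hsum : ∑ i, a i = 1)
    (e₁ : ℝ)
    (he₁ : ∀ f : ℝ → ℝ, ContDiff ℝ r f →
      (∀ k ≤ r, ∀ x ∈ Set.Icc (0 : ℝ) 1, |iteratedDeriv k f x| ≤ 1) →
      |(∫ x in (0 : ℝ)..1, f x) - ∑ i, a i * f (t i)| ≤ e₁)
    (A : ℝ) (hA : A = ∑ i, |a i|) :
    (∀ f ∈ CrUnitBall d r,
      |(∫ x in Set.Icc (0 : Fin d → ℝ) 1, f x) -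
          ∑ i : Fin d → Fin m, (∏ j, a (i j)) * f (fun j => t (i j))| ≤
        (∑ j ∈ Finset.range d, A ^ j) * e₁) ∧
    ((∀ i, 0 ≤ a i) → ∀ f ∈ CrUnitBall d r,
      |(∫ x in Set.Icc (0 : Fin d → ℝ) 1, f x) -
          ∑ i : Fin d → Fin m, (∏ j, a (i j)) * f (fun j => t (i j))| ≤ d * e₁) :=
  tensor_product_rule_error_general d r m a t ht hsum e₁ he₁ A hA
end

section
/- For every n ∈ ℕ and every quadrature rule A_n(f) = ∑_{i=1}^n a_i f(x_i) with n nodes on [0,1], the worst case error over the class of 1-Lipschitz functions on [0,1] is at least 1/(4n). Consequently the midpoint rule with n nodes is optimal for this class. -/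
/-!
The distance `f` to the set of nodes is 1-Lipschitz and vanishes at every node, so any rule
returns `0` on it. For `c ≥ 0` the tent of height `c` at the nearest node already gives
`f ≥ c - ∑ᵢ max 0 (c - |s - xᵢ|)`, and each tent has area `c²`; hence `∫₀¹ f ≥ c - n c²`,
which is `1/(4n)` at `c = 1/(2n)`.

Conversely, on each of the `n` cells a 1-Lipschitz function differs from its value at the
midpoint by at most the distance to the midpoint, whose integral over the cell is `1/(4n²)`.
-/

open Set MeasureTheory intervalIntegral Metric

theorem integral_abs_neg_to_self {h : ℝ} (hh : 0 ≤ h) : ∫ u in -h..h, |u| = h ^ 2 := by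
  have hright : ∫ u in (0 : ℝ)..h, |u| = h ^ 2 / 2 := by
    rw [integral_congr (g := fun u => u) fun u hu => abs_of_nonneg (uIcc_of_le hh ▸ hu).1,
      integral_id]
    ring
  have hleft : ∫ u in -h..0, |u| = h ^ 2 / 2 := by
    rw [← hright]
    simpa using (integral_comp_neg (a := 0) (b := h) (fun u => |u|)).symm
  have hint : ∀ a b : ℝ, IntervalIntegrable (|·|) volume a b :=
    fun a b => continuous_abs.intervalIntegrable a b
  rw [← integral_add_adjacent_intervals (hint _ 0) (hint 0 _), hleft, hright]
  ring

noncomputable def tent (c x s : ℝ) : ℝ := max 0 (c - |s - x|)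

theorem tent_nonneg (c x s : ℝ) : 0 ≤ tent c x s := le_max_left _ _

theorem continuous_tent (c x : ℝ) : Continuous (tent c x) := by
  unfold tent; fun_prop

theorem support_tent_subset (c x : ℝ) :
    Function.support (tent c x) ⊆ Ioo (x - c) (x + c) := by
  intro s hs
  have : 0 < c - |s - x| := by
    by_contra! h
    exact hs (max_eq_left h)
  constructor <;> linarith [abs_lt.mp (sub_pos.mp this)]

theorem integrable_tent (c x : ℝ) : Integrable (tent c x) :=
  (continuous_tent c x).integrable_of_hasCompactSupport
    (HasCompactSupport.intro isCompact_Icc fun _ hs =>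
      Function.notMem_support.mp fun h => hs (Ioo_subset_Icc_self (support_tent_subset c x h)))

theorem integral_tent {c : ℝ} (hc : 0 ≤ c) (x : ℝ) : ∫ s, tent c x s = c ^ 2 := by
  have hshift : ∫ s, tent c x s = ∫ u, tent c 0 u := by
    simpa [tent] using integral_sub_right_eq_self (tent c 0) x
  have hsupp : Function.support (tent c 0) ⊆ Ioc (-c) c := by
    simpa [← sub_eq_add_neg] using (support_tent_subset c 0).trans Ioo_subset_Ioc_self
  rw [hshift, ← integral_eq_integral_of_support_subset hsupp,
    integral_congr (g := fun u => c - |u|) fun u hu => ?_,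
    intervalIntegral.integral_sub intervalIntegrable_const
      (continuous_abs.intervalIntegrable _ _),
    intervalIntegral.integral_const, integral_abs_neg_to_self hc, smul_eq_mul]
  · ring
  · have := abs_le.mpr (uIcc_of_le (neg_le_self hc) ▸ hu)
    simp [tent, this]

theorem integral_tent_le {a b c : ℝ} (hab : a ≤ b) (hc : 0 ≤ c) (x : ℝ) :
    ∫ s in a..b, tent c x s ≤ c ^ 2 := by
  rw [integral_of_le hab, ← integral_tent hc x]
  exact setIntegral_le_integral (integrable_tent c x) (ae_of_all _ (tent_nonneg c x))

theorem sub_sum_tent_le_infDist {ι : Type*} [Fintype ι] [Nonempty ι] (x : ι → ℝ) (c s : ℝ) :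
    c - ∑ i, tent c (x i) s ≤ infDist s (range x) := by
  obtain ⟨_, ⟨j, rfl⟩, hj⟩ :=
    (finite_range x).isCompact.exists_infDist_eq_dist (range_nonempty x) s
  have hle : tent c (x j) s ≤ ∑ i, tent c (x i) s :=
    Finset.single_le_sum (fun i _ => tent_nonneg c (x i) s) (Finset.mem_univ j)
  have : c - |s - x j| ≤ tent c (x j) s := le_max_right _ _
  rw [hj, Real.dist_eq]
  linarith

theorem le_integral_infDist {ι : Type*} [Fintype ι] [Nonempty ι] (x : ι → ℝ) {a b c : ℝ}
    (hab : a ≤ b) (hc : 0 ≤ c) :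
    c * (b - a) - Fintype.card ι * c ^ 2 ≤ ∫ s in a..b, infDist s (range x) := by
  have htent : ∀ i ∈ Finset.univ, IntervalIntegrable (tent c (x i)) volume a b :=
    fun i _ => (continuous_tent c (x i)).intervalIntegrable a b
  have hsum : Continuous fun s => ∑ i, tent c (x i) s :=
    continuous_finsetSum _ fun i _ => continuous_tent c (x i)
  calc c * (b - a) - Fintype.card ι * c ^ 2
      ≤ c * (b - a) - ∑ i, ∫ s in a..b, tent c (x i) s := by
        have := Finset.sum_le_sum fun i (_ : i ∈ Finset.univ) => integral_tent_le hab hc (x i)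
        simp only [Finset.sum_const, Finset.card_univ, nsmul_eq_mul] at this
        linarith
    _ = ∫ s in a..b, (c - ∑ i, tent c (x i) s) := by
        rw [intervalIntegral.integral_sub intervalIntegrable_const (hsum.intervalIntegrable a b),
          integral_finsetSum htent, intervalIntegral.integral_const, smul_eq_mul, mul_comm]
    _ ≤ ∫ s in a..b, infDist s (range x) :=
        integral_mono_on hab ((continuous_const.sub hsum).intervalIntegrable a b)
          ((lipschitz_infDist_pt _).continuous.intervalIntegrable a b)
          fun s _ => sub_sum_tent_le_infDist x c s

theorem abs_integral_sub_mul_midpoint_le {g : ℝ → ℝ} {K : NNReal} {a b : ℝ} (hab : a ≤ b)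
    (hg : LipschitzOnWith K g (Icc a b)) :
    |(∫ s in a..b, g s) - (b - a) * g ((a + b) / 2)| ≤ K * (b - a) ^ 2 / 4 := by
  have hm : (a + b) / 2 ∈ Icc a b := ⟨by linarith, by linarith⟩
  set m := (a + b) / 2
  have hgc : ContinuousOn g (uIcc a b) := hg.continuousOn.mono (uIcc_of_le hab).subset
  calc |(∫ s in a..b, g s) - (b - a) * g m|
      = |∫ s in a..b, (g s - g m)| := by
        rw [intervalIntegral.integral_sub hgc.intervalIntegrable intervalIntegrable_const,
          intervalIntegral.integral_const, smul_eq_mul]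
    _ ≤ ∫ s in a..b, |g s - g m| := abs_integral_le_integral_abs hab
    _ ≤ ∫ s in a..b, K * |s - m| := by
        refine integral_mono_on hab (hgc.sub continuousOn_const).abs.intervalIntegrable
          ((by fun_prop : Continuous fun s => (K : ℝ) * |s - m|).intervalIntegrable a b)
          fun s hs => ?_
        simpa [Real.dist_eq] using hg.dist_le_mul s hs m hm
    _ = K * (b - a) ^ 2 / 4 := by
        rw [intervalIntegral.integral_const_mul, integral_comp_sub_right (fun u => |u|),
          show a - m = -((b - a) / 2) by ring, show b - m = (b - a) / 2 by ring,
          integral_abs_neg_to_self (by linarith)]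
        ring

theorem abs_integral_sub_midpointRule_le {g : ℝ → ℝ} {K : NNReal} {n : ℕ} (hn : 0 < n)
    (hg : LipschitzOnWith K g (Icc 0 1)) :
    |(∫ s in (0 : ℝ)..1, g s) - (1 / n) * ∑ i ∈ Finset.range n, g ((2 * i + 1) / (2 * n))|
      ≤ K / (4 * n) := by
  have hn' : (0 : ℝ) < n := Nat.cast_pos.mpr hn
  have hle : ∀ k : ℕ, (k : ℝ) / n ≤ (k + 1) / n := fun k => by gcongr; simp
  have hsub : ∀ k < n, Icc ((k : ℝ) / n) ((k + 1) / n) ⊆ Icc 0 1 := fun k hk =>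
    Icc_subset_Icc (by positivity) (div_le_one_of_le₀ (by exact_mod_cast hk) hn'.le)
  have hsplit :
      ∑ k ∈ Finset.range n, ∫ s in (k : ℝ) / n..(k + 1) / n, g s = ∫ s in (0 : ℝ)..1, g s := by
    have := sum_integral_adjacent_intervals (f := g) (μ := volume)
      (a := fun k : ℕ => (k : ℝ) / n) (n := n) fun k hk =>
        (hg.continuousOn.mono ((uIcc_of_le (by exact_mod_cast hle k)).subset.trans
          (by exact_mod_cast hsub k hk))).intervalIntegrable
    simpa [hn'.ne'] using this
  have hcell : ∀ k ∈ Finset.range n, |(∫ s in (k : ℝ) / n..(k + 1) / n, g s)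
      - (1 / n) * g ((2 * k + 1) / (2 * n))| ≤ K / (4 * n ^ 2) := fun k hk => by
    have hwidth : ((k : ℝ) + 1) / n - k / n = 1 / n := by ring
    have hmid : ((k : ℝ) / n + (k + 1) / n) / 2 = (2 * k + 1) / (2 * n) := by field_simp; ring
    have := abs_integral_sub_mul_midpoint_le (hle k) (hg.mono (hsub k (Finset.mem_range.mp hk)))
    rw [hwidth, hmid] at this
    exact this.trans_eq (by ring)
  calc |(∫ s in (0 : ℝ)..1, g s) - (1 / n) * ∑ i ∈ Finset.range n, g ((2 * i + 1) / (2 * n))|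
      = |∑ k ∈ Finset.range n,
          ((∫ s in (k : ℝ) / n..(k + 1) / n, g s) - (1 / n) * g ((2 * k + 1) / (2 * n)))| := by
        rw [Finset.sum_sub_distrib, hsplit, Finset.mul_sum]
    _ ≤ ∑ k ∈ Finset.range n,
          |(∫ s in (k : ℝ) / n..(k + 1) / n, g s) - (1 / n) * g ((2 * k + 1) / (2 * n))| :=
        Finset.abs_sum_le_sum_abs _ _
    _ ≤ ∑ _k ∈ Finset.range n, (K : ℝ) / (4 * n ^ 2) := Finset.sum_le_sum hcell
    _ = K / (4 * n) := by
        rw [Finset.sum_const, Finset.card_range, nsmul_eq_mul]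
        field_simp

theorem quadrature_lower_bound_lipschitz_general (n : ℕ) (hn : 1 ≤ n)
    (x a : Fin n → ℝ) :
    (∃ f : ℝ → ℝ, (∀ y z : ℝ, |f y - f z| ≤ |y - z|) ∧
      1 / (4 * n) ≤ |(∫ s in (0 : ℝ)..1, f s) - ∑ i, a i * f (x i)|) ∧
    (∀ g : ℝ → ℝ, (∀ y ∈ Set.Icc (0 : ℝ) 1, ∀ z ∈ Set.Icc (0 : ℝ) 1,
        |g y - g z| ≤ |y - z|) →
      |(∫ s in (0 : ℝ)..1, g s) -
          (1 / n) * ∑ i ∈ Finset.range n, g ((2 * i + 1) / (2 * n))| ≤ 1 / (4 * n)) := by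
  have : NeZero n := ⟨Nat.one_le_iff_ne_zero.mp hn⟩
  refine ⟨⟨(infDist · (range x)), fun y z => ?_, ?_⟩, fun g hg => ?_⟩
  · simpa [Real.dist_eq] using (lipschitz_infDist_pt (range x)).dist_le_mul y z
  · have hnodes : ∑ i, a i * infDist (x i) (range x) = 0 := by
      simp [infDist_zero_of_mem (mem_range_self _)]
    -- `c = 1/(2n)` maximises `c - n c²`.
    have hbound := le_integral_infDist x zero_le_one (by positivity : (0 : ℝ) ≤ 1 / (2 * n))
    rw [hnodes, sub_zero, abs_of_nonneg (integral_nonneg zero_le_one fun _ _ => infDist_nonneg)]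
    convert hbound using 1
    simp only [Fintype.card_fin]
    field_simp
    ring
  · simpa using abs_integral_sub_midpointRule_le hn
      (LipschitzOnWith.mk_one fun y hy z hz => by simpa [Real.dist_eq] using hg y hy z hz)

/-- Any quadrature rule with n nodes on [0,1] has worst case error at least 1/(4n)
on the class of 1-Lipschitz functions; consequently the midpoint rule with n nodes,
whose error is at most 1/(4n), is optimal for this class. -/
theorem quadrature_lower_bound_lipschitz (n : ℕ) (hn : 1 ≤ n)
    (x a : Fin n → ℝ) (hx : ∀ i, x i ∈ Set.Icc (0 : ℝ) 1) :
    (∃ f : ℝ → ℝ, (∀ y z : ℝ, |f y - f z| ≤ |y - z|) ∧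
      1 / (4 * n) ≤ |(∫ s in (0 : ℝ)..1, f s) - ∑ i, a i * f (x i)|) ∧
    (∀ g : ℝ → ℝ, (∀ y ∈ Set.Icc (0 : ℝ) 1, ∀ z ∈ Set.Icc (0 : ℝ) 1,
        |g y - g z| ≤ |y - z|) →
      |(∫ s in (0 : ℝ)..1, g s) -
          (1 / n) * ∑ i ∈ Finset.range n, g ((2 * i + 1) / (2 * n))| ≤ 1 / (4 * n)) :=
  quadrature_lower_bound_lipschitz_general n hn x a
end

section
/- Let F be a class of real-valued functions on a domain D that is symmetric (f ∈ F implies −f ∈ F) and convex. For the optimization problem OPT(f) = sup_{x∈D} f(x) and the L∞-approximation problem, the n-th minimal worst case errors using n adaptive function values satisfy e_n(F, APP)/2 ≤ e_n(F, OPT) ≤ e_n(F, APP). -/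
/-- The information (list of function values) computed by an adaptive algorithm whose
node-selection map is `next`, after `n` adaptive evaluations of `f`. -/
def runInfo {D : Type*} (next : List ℝ → D) (f : D → ℝ) : ℕ → List ℝ
  | 0 => []
  | n + 1 => runInfo next f n ++ [f (next (runInfo next f n))]

/-- The n-th minimal worst case error for optimization OPT(f) = sup_{x∈D} f(x),
over all (adaptive) algorithms using n function values. -/
noncomputable def errOPT {D : Type*} (n : ℕ) (F : Set (D → ℝ)) : ℝ :=
  sInf {e | 0 ≤ e ∧ ∃ (next : List ℝ → D) (out : List ℝ → ℝ),
    ∀ f ∈ F, |sSup (Set.range f) - out (runInfo next f n)| ≤ e}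

/-- The n-th minimal worst case error for L∞-approximation APP(f) = f,
over all (adaptive) algorithms using n function values. -/
noncomputable def errAPP {D : Type*} (n : ℕ) (F : Set (D → ℝ)) : ℝ :=
  sInf {e | 0 ≤ e ∧ ∃ (next : List ℝ → D) (out : List ℝ → (D → ℝ)),
    ∀ f ∈ F, ∀ x, |f x - out (runInfo next f n) x| ≤ e}

/-!
An approximation `g` of `f` with `‖f - g‖_∞ ≤ e` yields `sup g` as an estimate of `sup f`
with error at most `e`, whence `e_n(OPT) ≤ e_n(APP)`.

Conversely, run an optimization algorithm of error `e` non-adaptively along the nodes it queries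
when every observed value is `0`. If `f, g ∈ F` agree there, then `h = (g - f) / 2 ∈ F` vanishes
there, so `h`, `-h` and `0` all produce the zero information and hence the same output; since
`sup 0 = 0`, this forces `sup h ≤ 2e` and `sup (-h) ≤ 2e`. Thus all functions with the same
information lie within `4e` of each other, and the midrange of the consistent values at each
point approximates `f` within `2e`.
-/

open Set

section Supremum

variable {ι : Type*} [Nonempty ι] {f g : ι → ℝ} {e : ℝ}

lemma ciSup_le_ciSup_add (hf : BddAbove (range f)) (h : ∀ i, g i ≤ f i + e) :
    ⨆ i, g i ≤ (⨆ i, f i) + e :=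
  ciSup_le fun i => (h i).trans (by gcongr; exact le_ciSup hf i)

lemma abs_ciSup_sub_ciSup_le (hf : BddAbove (range f)) (h : ∀ i, |f i - g i| ≤ e) :
    |(⨆ i, f i) - ⨆ i, g i| ≤ e := by
  have hfg : ∀ i, g i ≤ f i + e := fun i => by linarith [(abs_le.mp (h i)).1]
  have hgf : ∀ i, f i ≤ g i + e := fun i => by linarith [(abs_le.mp (h i)).2]
  have hg : BddAbove (range g) :=
    ⟨(⨆ i, f i) + e, forall_mem_range.2 fun i => (hfg i).trans (by gcongr; exact le_ciSup hf i)⟩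
  rw [abs_sub_le_iff]
  constructor
  · linarith [ciSup_le_ciSup_add hg hgf]
  · linarith [ciSup_le_ciSup_add hf hfg]

end Supremum

lemma abs_sub_midrange_le {A : Set ℝ} {a r : ℝ} (ha : a ∈ A)
    (hA : A ⊆ Icc (a - 2 * r) (a + 2 * r)) : |a - (sSup A + sInf A) / 2| ≤ r := by
  have hup : sSup A ≤ a + 2 * r := csSup_le ⟨a, ha⟩ fun b hb => (hA hb).2
  have hlow : a - 2 * r ≤ sInf A := le_csInf ⟨a, ha⟩ fun b hb => (hA hb).1
  have hsup : a ≤ sSup A := le_csSup (bddAbove_Icc.mono hA) ha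
  have hinf : sInf A ≤ a := csInf_le (bddBelow_Icc.mono hA) ha
  rw [abs_le]
  constructor <;> linarith

lemma Real.sInf_le_mul_sInf {S T : Set ℝ} {c : ℝ} (hc : 0 ≤ c) (hT : ∀ t ∈ T, 0 ≤ t)
    (hST : ∀ s ∈ S, c * s ∈ T) (hTS : T.Nonempty → S.Nonempty) : sInf T ≤ c * sInf S := by
  rcases S.eq_empty_or_nonempty with rfl | hS
  · rw [not_nonempty_iff_eq_empty.mp (mt hTS not_nonempty_empty)]
    simp
  · rw [← smul_eq_mul, ← Real.sInf_smul_of_nonneg hc]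
    exact csInf_le_csInf ⟨0, hT⟩ hS.smul_set (smul_set_subset_iff.mpr hST)

section Algorithms

variable {D : Type*}

def zeroPathNode (next : List ℝ → D) (k : ℕ) : D := next (List.replicate k 0)

lemma runInfo_of_length (p : ℕ → D) (f : D → ℝ) (m : ℕ) :
    runInfo (fun y => p y.length) f m = (List.range m).map (f ∘ p) := by
  induction m with
  | zero => rfl
  | succ m ih => simp [runInfo, ih, List.range_succ]

lemma runInfo_eq_replicate_zero (next : List ℝ → D) {h : D → ℝ} {m : ℕ}
    (hz : ∀ k < m, h (zeroPathNode next k) = 0) : runInfo next h m = List.replicate m 0 := by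
  induction m with
  | zero => rfl
  | succ m ih =>
    have hm : h (next (List.replicate m 0)) = 0 := hz m m.lt_succ_self
    rw [runInfo, ih fun k hk => hz k (by omega), hm, List.replicate_succ']

variable (F : Set (D → ℝ)) (n : ℕ)

def OPTWithin (next : List ℝ → D) (out : List ℝ → ℝ) (e : ℝ) : Prop :=
  ∀ f ∈ F, |sSup (range f) - out (runInfo next f n)| ≤ e

def APPWithin (next : List ℝ → D) (out : List ℝ → D → ℝ) (e : ℝ) : Prop :=
  ∀ f ∈ F, ∀ x, |f x - out (runInfo next f n) x| ≤ e

def optErrors : Set ℝ := {e | 0 ≤ e ∧ ∃ next out, OPTWithin F n next out e}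

def appErrors : Set ℝ := {e | 0 ≤ e ∧ ∃ next out, APPWithin F n next out e}

lemma errOPT_eq_sInf_optErrors : errOPT n F = sInf (optErrors F n) := rfl

lemma errAPP_eq_sInf_appErrors : errAPP n F = sInf (appErrors F n) := rfl

noncomputable def midrangeApprox (next : List ℝ → D) (y : List ℝ) (x : D) : ℝ :=
  let A := (fun g : D → ℝ => g x) '' {g | g ∈ F ∧ runInfo next g n = y}
  (sSup A + sInf A) / 2

variable {F n} {next : List ℝ → D} {e : ℝ}

lemma APPWithin.midrangeApprox
    (hdiam : ∀ f ∈ F, ∀ g ∈ F, runInfo next g n = runInfo next f n → ∀ x, |g x - f x| ≤ 2 * e) :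
    APPWithin F n next (midrangeApprox F n next) e := by
  intro f hf x
  refine abs_sub_midrange_le ⟨f, ⟨hf, rfl⟩, rfl⟩ ?_
  rintro _ ⟨g, ⟨hg, hgf⟩, rfl⟩
  have := abs_le.mp (hdiam f hf g hg hgf x)
  constructor <;> linarith

lemma APPWithin.optWithin_sSup [Nonempty D] (hbdd : ∀ f ∈ F, BddAbove (range f))
    {out : List ℝ → D → ℝ} (happ : APPWithin F n next out e) :
    OPTWithin F n next (fun y => sSup (range (out y))) e :=
  fun f hf => abs_ciSup_sub_ciSup_le (hbdd f hf) (happ f hf)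

lemma OPTWithin.abs_le_of_vanishing {out : List ℝ → ℝ} (hopt : OPTWithin F n next out e)
    (hbdd : ∀ f ∈ F, BddAbove (range f)) {h : D → ℝ} (hh : h ∈ F) (hnh : -h ∈ F) (h0 : 0 ∈ F)
    (hz : ∀ k < n, h (zeroPathNode next k) = 0) (x : D) : |h x| ≤ 2 * e := by
  have hout_h := abs_le.mp (hopt h hh)
  have hout_nh := abs_le.mp (hopt (-h) hnh)
  have hout_0 := abs_le.mp (hopt 0 h0)
  rw [runInfo_eq_replicate_zero next hz] at hout_h
  rw [runInfo_eq_replicate_zero next fun k hk => by simp [hz k hk]] at hout_nh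
  rw [runInfo_eq_replicate_zero next fun _ _ => rfl] at hout_0
  have hsup0 : sSup (range (0 : D → ℝ)) = 0 := Real.iSup_const_zero
  have hle : h x ≤ sSup (range h) := le_csSup (hbdd h hh) ⟨x, rfl⟩
  have hle' : -h x ≤ sSup (range (-h)) := le_csSup (hbdd (-h) hnh) ⟨x, rfl⟩
  rw [abs_le]
  constructor <;> linarith

lemma OPTWithin.abs_sub_le_of_runInfo_eq {out : List ℝ → ℝ} (hopt : OPTWithin F n next out e)
    (hsym : ∀ f ∈ F, -f ∈ F) (hconv : Convex ℝ F) (hbdd : ∀ f ∈ F, BddAbove (range f))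
    {f g : D → ℝ} (hf : f ∈ F) (hg : g ∈ F)
    (hfg : runInfo (fun y => zeroPathNode next y.length) g n =
      runInfo (fun y => zeroPathNode next y.length) f n) (x : D) :
    |g x - f x| ≤ 2 * (2 * e) := by
  set h := midpoint ℝ g (-f)
  have hh : h ∈ F := hconv.midpoint_mem hg (hsym f hf)
  have h_apply : ∀ x, h x = (g x - f x) / 2 := fun x => by
    simp only [h, midpoint_eq_smul_add, invOf_eq_inv, Pi.smul_apply, Pi.add_apply, Pi.neg_apply,
      smul_eq_mul]
    ring
  have hz : ∀ k < n, h (zeroPathNode next k) = 0 := fun k hk => by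
    rw [runInfo_of_length, runInfo_of_length, List.map_inj_left] at hfg
    have hgf : g (zeroPathNode next k) = f (zeroPathNode next k) := hfg k (List.mem_range.mpr hk)
    rw [h_apply, hgf, sub_self, zero_div]
  have h0 : (0 : D → ℝ) ∈ F := midpoint_self_neg ℝ h ▸ hconv.midpoint_mem hh (hsym h hh)
  have := hopt.abs_le_of_vanishing hbdd hh (hsym h hh) h0 hz x
  rw [h_apply, abs_div, abs_two] at this
  linarith

lemma OPTWithin.appWithin_midrangeApprox {out : List ℝ → ℝ} (hopt : OPTWithin F n next out e)
    (hsym : ∀ f ∈ F, -f ∈ F) (hconv : Convex ℝ F) (hbdd : ∀ f ∈ F, BddAbove (range f)) :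
    APPWithin F n (fun y => zeroPathNode next y.length)
      (midrangeApprox F n fun y => zeroPathNode next y.length) (2 * e) :=
  APPWithin.midrangeApprox fun _ hf _ hg hfg =>
    hopt.abs_sub_le_of_runInfo_eq hsym hconv hbdd hf hg hfg

variable (hbdd : ∀ f ∈ F, BddAbove (range f))
include hbdd

lemma appErrors_subset_optErrors [Nonempty D] : appErrors F n ⊆ optErrors F n :=
  fun _ ⟨he, next, _, happ⟩ => ⟨he, next, _, happ.optWithin_sSup hbdd⟩

lemma two_mul_mem_appErrors (hsym : ∀ f ∈ F, -f ∈ F) (hconv : Convex ℝ F)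
    (he : e ∈ optErrors F n) : 2 * e ∈ appErrors F n :=
  let ⟨he, _, _, hopt⟩ := he
  ⟨by positivity, _, _, hopt.appWithin_midrangeApprox hsym hconv hbdd⟩

end Algorithms

/-- For a symmetric and convex class F of (bounded) real-valued functions on D, the
n-th minimal worst case errors for optimization and L∞-approximation satisfy
e_n(F, APP)/2 ≤ e_n(F, OPT) ≤ e_n(F, APP). -/
theorem opt_vs_app (D : Type*) [Nonempty D] (n : ℕ) (F : Set (D → ℝ))
    (hsym : ∀ f ∈ F, -f ∈ F) (hconv : Convex ℝ F)
    (hbdd : ∀ f ∈ F, BddAbove (Set.range f) ∧ BddBelow (Set.range f)) :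
    errAPP n F / 2 ≤ errOPT n F ∧ errOPT n F ≤ errAPP n F := by
  have hbdd' : ∀ f ∈ F, BddAbove (range f) := fun f hf => (hbdd f hf).1
  have hdouble := fun e => two_mul_mem_appErrors (n := n) (e := e) hbdd' hsym hconv
  have hsub := appErrors_subset_optErrors (n := n) hbdd'
  have hpos : ∀ e ∈ appErrors F n, 0 ≤ e := fun _ he => he.1
  rw [errAPP_eq_sInf_appErrors, errOPT_eq_sInf_optErrors]
  constructor
  · have := Real.sInf_le_mul_sInf zero_le_two hpos hdouble fun ⟨e, he⟩ => ⟨e, hsub he⟩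
    linarith
  · simpa using Real.sInf_le_mul_sInf zero_le_one (fun _ he => he.1)
      (fun e he => by rw [one_mul]; exact hsub he) fun ⟨e, he⟩ => ⟨_, hdouble e he⟩
end
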